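/- arXiv:1607.02502 — 2 statements merged into one kernel-verified Lean document; each statement's English description precedes it below -/
import Mathlib

section
/- For every probability mass function π on Ω, the function Φ_π(h,g) = 1{h^0 = g^0}·π(h^0)·∏_{t=0}^{T(g)−1} φ^{h^t, g^t}(h^{t+1}, g^{t+1}) on Γ × Γ is a monotone coupling of the distancing sample-path law ν_π and the benchmark sample-path law μ_π with respect to the partial order ⪯_Γ on Γ: Φ_π(h,g) = 0 unless h ⪯_Γ g, Σ_{g ⪰_Γ h} Φ_π(h,g) = ν_π(h), and Σ_{h ⪯_Γ g} Φ_π(h,g) = μ_π(g). -/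
open Finset Filter Topology Matrix

noncomputable section

/-- Awareness information received by node `i`: a weighted combination of the fraction of
infected social-network neighbors and the global fraction of infected nodes. -/
def infoAwareness (n : ℕ) (GI : SimpleGraph (Fin n)) [DecidableRel GI.Adj]
    (α : ℝ) (x : Fin n → ℝ) (i : Fin n) : ℝ :=
  (α / ((GI.neighborFinset i).card : ℝ)) * ∑ j ∈ GI.neighborFinset i, x j
    + ((1 - α) / (n : ℝ)) * ∑ j, x j

/-- Social distancing action of node `i`. -/
def distAction (n : ℕ) (GI : SimpleGraph (Fin n)) [DecidableRel GI.Adj]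
    (α : ℝ) (x : Fin n → ℝ) (i : Fin n) : ℝ :=
  1 - infoAwareness n GI α x i

/-- Benchmark susceptible-to-infected probability `p01_i(x)`. -/
def p01Bench (n : ℕ) (GC : SimpleGraph (Fin n)) [DecidableRel GC.Adj]
    (β : ℝ) (x : Fin n → ℝ) (i : Fin n) : ℝ :=
  1 - ∏ j ∈ GC.neighborFinset i, (1 - β * x j)

/-- Distancing susceptible-to-infected probability `p01d_i(x)`. -/
def p01Dist (n : ℕ) (GC GI : SimpleGraph (Fin n)) [DecidableRel GC.Adj] [DecidableRel GI.Adj]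
    (α β : ℝ) (x : Fin n → ℝ) (i : Fin n) : ℝ :=
  1 - ∏ j ∈ GC.neighborFinset i, (1 - β * distAction n GI α x i * x j)

/-- Distancing mean-field map `φ`. -/
def phiMap (n : ℕ) (GC GI : SimpleGraph (Fin n)) [DecidableRel GC.Adj] [DecidableRel GI.Adj]
    (α β δ : ℝ) (x : Fin n → ℝ) (i : Fin n) : ℝ :=
  (1 - δ) * x i + (1 - (1 - δ) * x i) * p01Dist n GC GI α β x i

/-- Benchmark mean-field map `ψ`. -/
def psiMap (n : ℕ) (GC : SimpleGraph (Fin n)) [DecidableRel GC.Adj]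
    (β δ : ℝ) (x : Fin n → ℝ) (i : Fin n) : ℝ :=
  (1 - δ) * x i + (1 - (1 - δ) * x i) * p01Bench n GC β x i

end

/-- A probability mass function on a countable (or arbitrary) type. -/
def IsPMF {X : Type*} (p : X → ℝ) : Prop := (∀ x, 0 ≤ p x) ∧ HasSum p 1

/-- `p` is a monotone coupling of the probability mass functions `p1` and `p2` on the
partially ordered set `X`: it is a pmf on `X × X` vanishing off `{(x,y) : x ⪯ y}` whose
first marginal is `p1` and second marginal is `p2`. -/
def IsMonotoneCoupling {X : Type*} [PartialOrder X] (p : X × X → ℝ) (p1 p2 : X → ℝ) : Prop :=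
  IsPMF p ∧ IsPMF p1 ∧ IsPMF p2 ∧
  (∀ x y : X, ¬ x ≤ y → p (x, y) = 0) ∧
  (∀ x, ∑' y, p (x, y) = p1 x) ∧
  (∀ y, ∑' x, p (x, y) = p2 y)

noncomputable section

/-- Embedding of a binary epidemic state into `[0,1]^n`. -/
def stateVec (n : ℕ) (s : Fin n → Bool) : Fin n → ℝ := fun j => if s j then 1 else 0

/-- Benchmark node-level transition probabilities `ℙ_i(s, ·)` on `{0,1}`. -/
def nodeBench (n : ℕ) (GC : SimpleGraph (Fin n)) [DecidableRel GC.Adj] (β δ : ℝ)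
    (s : Fin n → Bool) (i : Fin n) : Bool → ℝ := fun b =>
  if s i then
    (if b then 1 - δ * (1 - p01Bench n GC β (stateVec n s) i)
     else δ * (1 - p01Bench n GC β (stateVec n s) i))
  else
    (if b then p01Bench n GC β (stateVec n s) i
     else 1 - p01Bench n GC β (stateVec n s) i)

/-- Distancing node-level transition probabilities `ℙ_i^d(s, ·)` on `{0,1}`. -/
def nodeDist (n : ℕ) (GC GI : SimpleGraph (Fin n)) [DecidableRel GC.Adj] [DecidableRel GI.Adj]
    (α β δ : ℝ) (s : Fin n → Bool) (i : Fin n) : Bool → ℝ := fun b =>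
  if s i then
    (if b then 1 - δ * (1 - p01Dist n GC GI α β (stateVec n s) i)
     else δ * (1 - p01Dist n GC GI α β (stateVec n s) i))
  else
    (if b then p01Dist n GC GI α β (stateVec n s) i
     else 1 - p01Dist n GC GI α β (stateVec n s) i)

/-- Benchmark Markov transition matrix `K(s,s') = ∏ i, ℙ_i(s, s'_i)`. -/
def Kbench (n : ℕ) (GC : SimpleGraph (Fin n)) [DecidableRel GC.Adj] (β δ : ℝ)
    (s s' : Fin n → Bool) : ℝ := ∏ i, nodeBench n GC β δ s i (s' i)

/-- Distancing Markov transition matrix `K_d(s,s') = ∏ i, ℙ_i^d(s, s'_i)`. -/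
def Kdist (n : ℕ) (GC GI : SimpleGraph (Fin n)) [DecidableRel GC.Adj] [DecidableRel GI.Adj]
    (α β δ : ℝ) (s s' : Fin n → Bool) : ℝ := ∏ i, nodeDist n GC GI α β δ s i (s' i)

/-- Node-level coupling `φ_i^{x,y}` of `ℙ_i^d(x,·)` and `ℙ_i(y,·)`, for `x ⪯ y`.
(The case `x_i = 1, y_i = 0` cannot occur when `x ⪯ y`; it is assigned `0`.) -/
def nodeCouple (n : ℕ) (GC GI : SimpleGraph (Fin n)) [DecidableRel GC.Adj] [DecidableRel GI.Adj]
    (α β δ : ℝ) (x y : Fin n → Bool) (i : Fin n) : Bool × Bool → ℝ := fun ab =>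
  match x i, y i, ab.1, ab.2 with
  | true, true, false, false =>
      δ * (1 - p01Bench n GC β (stateVec n y) i)
  | true, true, false, true =>
      δ * (p01Bench n GC β (stateVec n y) i - p01Dist n GC GI α β (stateVec n x) i)
  | true, true, true, false => 0
  | true, true, true, true =>
      1 - δ * (1 - p01Dist n GC GI α β (stateVec n x) i)
  | false, false, false, false =>
      1 - p01Bench n GC β (stateVec n y) i
  | false, false, false, true =>
      p01Bench n GC β (stateVec n y) i - p01Dist n GC GI α β (stateVec n x) i
  | false, false, true, false => 0
  | false, false, true, true =>
      p01Dist n GC GI α β (stateVec n x) i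
  | false, true, false, false =>
      δ * (1 - p01Bench n GC β (stateVec n y) i)
  | false, true, false, true =>
      1 - p01Dist n GC GI α β (stateVec n x) i - δ * (1 - p01Bench n GC β (stateVec n y) i)
  | false, true, true, false => 0
  | false, true, true, true =>
      p01Dist n GC GI α β (stateVec n x) i
  | true, false, _, _ => 0

/-- State-level coupling `φ^{x,y}(ω,ω') = ∏ i, φ_i^{x,y}(ω_i, ω'_i)`. -/
def stateCouple (n : ℕ) (GC GI : SimpleGraph (Fin n)) [DecidableRel GC.Adj] [DecidableRel GI.Adj]
    (α β δ : ℝ) (x y : Fin n → Bool) (ω ω' : Fin n → Bool) : ℝ :=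
  ∏ i, nodeCouple n GC GI α β δ x y i (ω i, ω' i)

end

noncomputable section

/-- The all-susceptible state. -/
def allSusc (n : ℕ) : Fin n → Bool := fun _ => false

/-- A sample path: a trajectory of states with positive benchmark transition
probabilities that reaches the all-susceptible absorbing state in finite time. -/
def IsSamplePath (n : ℕ) (GC : SimpleGraph (Fin n)) [DecidableRel GC.Adj] (β δ : ℝ)
    (g : ℕ → Fin n → Bool) : Prop :=
  (∀ t, 0 < Kbench n GC β δ (g t) (g (t + 1))) ∧ ∃ T, g T = allSusc n

/-- The set `Γ` of sample paths, as a subtype (partially ordered pointwise). -/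
abbrev SamplePath (n : ℕ) (GC : SimpleGraph (Fin n)) [DecidableRel GC.Adj] (β δ : ℝ) :=
  {g : ℕ → Fin n → Bool // IsSamplePath n GC β δ g}

/-- Absorption time `T(g) = min {t : g^t = 0}`. -/
def absTime (n : ℕ) (GC : SimpleGraph (Fin n)) [DecidableRel GC.Adj] (β δ : ℝ)
    (g : SamplePath n GC β δ) : ℕ :=
  sInf {t | g.1 t = allSusc n}

/-- Benchmark sample-path law `μ_π(g) = π(g⁰)·∏_{t<T(g)} K(gᵗ, gᵗ⁺¹)`. -/
def muPath (n : ℕ) (GC : SimpleGraph (Fin n)) [DecidableRel GC.Adj] (β δ : ℝ)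
    (π : (Fin n → Bool) → ℝ) (g : SamplePath n GC β δ) : ℝ :=
  π (g.1 0) * ∏ t ∈ Finset.range (absTime n GC β δ g), Kbench n GC β δ (g.1 t) (g.1 (t + 1))

/-- Distancing sample-path law `ν_π(g) = π(g⁰)·∏_{t<T(g)} K_d(gᵗ, gᵗ⁺¹)`. -/
def nuPath (n : ℕ) (GC GI : SimpleGraph (Fin n)) [DecidableRel GC.Adj] [DecidableRel GI.Adj]
    (α β δ : ℝ) (π : (Fin n → Bool) → ℝ) (g : SamplePath n GC β δ) : ℝ :=
  π (g.1 0) * ∏ t ∈ Finset.range (absTime n GC β δ g), Kdist n GC GI α β δ (g.1 t) (g.1 (t + 1))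

/-- The coupling `Φ_π` on pairs of sample paths:
`Φ_π(h,g) = 1{h⁰ = g⁰}·π(h⁰)·∏_{t<T(g)} φ^{hᵗ,gᵗ}(hᵗ⁺¹, gᵗ⁺¹)`. -/
def PhiPath (n : ℕ) (GC GI : SimpleGraph (Fin n)) [DecidableRel GC.Adj] [DecidableRel GI.Adj]
    (α β δ : ℝ) (π : (Fin n → Bool) → ℝ)
    (hg : SamplePath n GC β δ × SamplePath n GC β δ) : ℝ :=
  (if hg.1.1 0 = hg.2.1 0 then (1 : ℝ) else 0) * π (hg.1.1 0) *
    ∏ t ∈ Finset.range (absTime n GC β δ hg.2),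
      stateCouple n GC GI α β δ (hg.1.1 t) (hg.2.1 t) (hg.1.1 (t + 1)) (hg.2.1 (t + 1))

end


section Aux

variable {n : ℕ} {GC GI : SimpleGraph (Fin n)} [DecidableRel GC.Adj] [DecidableRel GI.Adj]
variable {α β δ : ℝ}

lemma sv_nonneg (s : Fin n → Bool) (j : Fin n) : 0 ≤ stateVec n s j := by
  unfold stateVec; split <;> norm_num

lemma sv_le_one (s : Fin n → Bool) (j : Fin n) : stateVec n s j ≤ 1 := by
  unfold stateVec; split <;> norm_num

lemma sv_mono {s s' : Fin n → Bool} (h : s ≤ s') (j : Fin n) :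
    stateVec n s j ≤ stateVec n s' j := by
  have hj := h j
  unfold stateVec
  cases hs : s j
  · cases hs' : s' j <;> norm_num
  · rw [hs] at hj
    have : s' j = true := Bool.le_iff_imp.1 hj rfl
    rw [this]

lemma sv_allSusc (j : Fin n) : stateVec n (allSusc n) j = 0 := by
  unfold stateVec allSusc; simp

lemma info_nonneg (hα0 : 0 ≤ α) (hα1 : α ≤ 1) (s : Fin n → Bool) (i : Fin n) :
    0 ≤ infoAwareness n GI α (stateVec n s) i := by
  unfold infoAwareness
  have h1 : 0 ≤ (α / ((GI.neighborFinset i).card : ℝ)) := div_nonneg hα0 (by positivity)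
  have h2 : 0 ≤ ((1 - α) / (n : ℝ)) := div_nonneg (by linarith) (by positivity)
  have h3 : 0 ≤ ∑ j ∈ GI.neighborFinset i, stateVec n s j :=
    Finset.sum_nonneg fun j _ => sv_nonneg s j
  have h4 : 0 ≤ ∑ j, stateVec n s j := Finset.sum_nonneg fun j _ => sv_nonneg s j
  have := mul_nonneg h1 h3
  have := mul_nonneg h2 h4
  linarith

lemma info_le_one (hn : 0 < n) (hGI : ∀ i, (GI.neighborFinset i).Nonempty)
    (hα0 : 0 ≤ α) (hα1 : α ≤ 1) (s : Fin n → Bool) (i : Fin n) :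
    infoAwareness n GI α (stateVec n s) i ≤ 1 := by
  unfold infoAwareness
  have hc : (0:ℝ) < ((GI.neighborFinset i).card : ℝ) := by
    exact_mod_cast Finset.card_pos.2 (hGI i)
  have hn' : (0:ℝ) < (n:ℝ) := by exact_mod_cast hn
  have hs1 : ∑ j ∈ GI.neighborFinset i, stateVec n s j ≤ ((GI.neighborFinset i).card : ℝ) := by
    calc ∑ j ∈ GI.neighborFinset i, stateVec n s j
        ≤ ∑ _j ∈ GI.neighborFinset i, (1:ℝ) := Finset.sum_le_sum (fun j _ => sv_le_one s j)
      _ = ((GI.neighborFinset i).card : ℝ) := by simp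
  have hs2 : ∑ j, stateVec n s j ≤ (n:ℝ) := by
    calc ∑ j, stateVec n s j ≤ ∑ _j : Fin n, (1:ℝ) := Finset.sum_le_sum (fun j _ => sv_le_one s j)
      _ = (n:ℝ) := by simp
  have hA : (α / ((GI.neighborFinset i).card : ℝ)) * ∑ j ∈ GI.neighborFinset i, stateVec n s j ≤ α := by
    rw [div_mul_eq_mul_div, div_le_iff₀ hc]
    calc α * ∑ j ∈ GI.neighborFinset i, stateVec n s j
        ≤ α * ((GI.neighborFinset i).card : ℝ) := mul_le_mul_of_nonneg_left hs1 hα0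
      _ = α * ((GI.neighborFinset i).card : ℝ) := rfl
  have hB : ((1 - α) / (n : ℝ)) * ∑ j, stateVec n s j ≤ 1 - α := by
    rw [div_mul_eq_mul_div, div_le_iff₀ hn']
    exact mul_le_mul_of_nonneg_left hs2 (by linarith)
  linarith

lemma act_nonneg (hn : 0 < n) (hGI : ∀ i, (GI.neighborFinset i).Nonempty)
    (hα0 : 0 ≤ α) (hα1 : α ≤ 1) (s : Fin n → Bool) (i : Fin n) :
    0 ≤ distAction n GI α (stateVec n s) i := by
  unfold distAction
  have := info_le_one hn hGI hα0 hα1 s i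
  linarith

lemma act_le_one (hα0 : 0 ≤ α) (hα1 : α ≤ 1) (s : Fin n → Bool) (i : Fin n) :
    distAction n GI α (stateVec n s) i ≤ 1 := by
  unfold distAction
  have := info_nonneg (GI := GI) hα0 hα1 s i
  linarith

lemma pow_le_prod_aux (hβ0 : 0 < β) (hβ1 : β < 1) {f : Fin n → ℝ} {s : Finset (Fin n)}
    (hf : ∀ j ∈ s, 1 - β ≤ f j) : (1-β)^n ≤ ∏ j ∈ s, f j := by
  have hcard : s.card ≤ n := by
    have := Finset.card_le_univ s
    simpa using this
  calc (1-β)^n ≤ (1-β)^s.card :=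
        pow_le_pow_of_le_one (by linarith) (by linarith) hcard
    _ = ∏ _j ∈ s, (1-β) := by rw [Finset.prod_const]
    _ ≤ ∏ j ∈ s, f j := Finset.prod_le_prod (fun j _ => by linarith) hf

/-- bounds for the benchmark product -/
lemma prodB_ge (hβ0 : 0 < β) (hβ1 : β < 1) (s : Fin n → Bool) (i : Fin n) :
    (1-β)^n ≤ ∏ j ∈ GC.neighborFinset i, (1 - β * stateVec n s j) :=
  pow_le_prod_aux hβ0 hβ1 (fun j _ => by
    have h1 := sv_le_one s j
    nlinarith [sv_nonneg s j])

lemma prodB_pos (hβ0 : 0 < β) (hβ1 : β < 1) (s : Fin n → Bool) (i : Fin n) :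
    0 < ∏ j ∈ GC.neighborFinset i, (1 - β * stateVec n s j) := by
  have := prodB_ge (GC := GC) hβ0 hβ1 s i
  have : (0:ℝ) < (1-β)^n := pow_pos (by linarith) n
  calc (0:ℝ) < (1-β)^n := this
    _ ≤ _ := prodB_ge (GC := GC) hβ0 hβ1 s i

lemma prodB_le_one (hβ0 : 0 < β) (hβ1 : β < 1) (s : Fin n → Bool) (i : Fin n) :
    ∏ j ∈ GC.neighborFinset i, (1 - β * stateVec n s j) ≤ 1 :=
  Finset.prod_le_one
    (fun j _ => by nlinarith [sv_le_one s j, sv_nonneg s j])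
    (fun j _ => by nlinarith [sv_nonneg s j])

lemma p01B_nonneg (hβ0 : 0 < β) (hβ1 : β < 1) (s : Fin n → Bool) (i : Fin n) :
    0 ≤ p01Bench n GC β (stateVec n s) i := by
  unfold p01Bench
  have := prodB_le_one (GC := GC) hβ0 hβ1 s i
  linarith

lemma p01B_lt_one (hβ0 : 0 < β) (hβ1 : β < 1) (s : Fin n → Bool) (i : Fin n) :
    p01Bench n GC β (stateVec n s) i < 1 := by
  unfold p01Bench
  have := prodB_pos (GC := GC) hβ0 hβ1 s i
  linarith

lemma one_sub_p01B_ge (hβ0 : 0 < β) (hβ1 : β < 1) (s : Fin n → Bool) (i : Fin n) :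
    (1-β)^n ≤ 1 - p01Bench n GC β (stateVec n s) i := by
  unfold p01Bench
  have := prodB_ge (GC := GC) hβ0 hβ1 s i
  linarith

lemma p01B_mono (hβ0 : 0 < β) (hβ1 : β < 1) {s s' : Fin n → Bool} (h : s ≤ s') (i : Fin n) :
    p01Bench n GC β (stateVec n s) i ≤ p01Bench n GC β (stateVec n s') i := by
  unfold p01Bench
  have : ∏ j ∈ GC.neighborFinset i, (1 - β * stateVec n s' j)
      ≤ ∏ j ∈ GC.neighborFinset i, (1 - β * stateVec n s j) := by
    apply Finset.prod_le_prod
    · intro j _; nlinarith [sv_le_one s' j, sv_nonneg s' j]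
    · intro j _; nlinarith [sv_mono h j, sv_nonneg s j]
  linarith

lemma p01B_allSusc (i : Fin n) : p01Bench n GC β (stateVec n (allSusc n)) i = 0 := by
  unfold p01Bench
  have : ∀ j ∈ GC.neighborFinset i, (1 - β * stateVec n (allSusc n) j) = 1 := by
    intro j _; rw [sv_allSusc]; ring
  rw [Finset.prod_congr rfl this]
  simp

lemma prodD_ge (hn : 0 < n) (hGI : ∀ i, (GI.neighborFinset i).Nonempty)
    (hα0 : 0 ≤ α) (hα1 : α ≤ 1) (hβ0 : 0 < β) (hβ1 : β < 1) (s : Fin n → Bool) (i : Fin n) :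
    (1-β)^n ≤ ∏ j ∈ GC.neighborFinset i, (1 - β * distAction n GI α (stateVec n s) i * stateVec n s j) :=
  pow_le_prod_aux hβ0 hβ1 (fun j _ => by
    have h1 := sv_le_one s j
    have h2 := sv_nonneg s j
    have h3 := act_nonneg hn hGI hα0 hα1 s i
    have h4 := act_le_one (GI := GI) hα0 hα1 s i
    have key : β * (distAction n GI α (stateVec n s) i * stateVec n s j) ≤ β * 1 :=
      mul_le_mul_of_nonneg_left (mul_le_one₀ h4 h2 h1) (le_of_lt hβ0)
    nlinarith [key])

lemma prodD_le_one (hn : 0 < n) (hGI : ∀ i, (GI.neighborFinset i).Nonempty)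
    (hα0 : 0 ≤ α) (hα1 : α ≤ 1) (hβ0 : 0 < β) (hβ1 : β < 1) (s : Fin n → Bool) (i : Fin n) :
    ∏ j ∈ GC.neighborFinset i, (1 - β * distAction n GI α (stateVec n s) i * stateVec n s j) ≤ 1 := by
  apply Finset.prod_le_one
  · intro j _
    have h1 := sv_le_one s j
    have h2 := sv_nonneg s j
    have h3 := act_nonneg hn hGI hα0 hα1 s i
    have h4 := act_le_one (GI := GI) hα0 hα1 s i
    have key : β * (distAction n GI α (stateVec n s) i * stateVec n s j) ≤ β * 1 :=
      mul_le_mul_of_nonneg_left (mul_le_one₀ h4 h2 h1) (le_of_lt hβ0)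
    nlinarith [key]
  · intro j _
    have h2 := sv_nonneg s j
    have h3 := act_nonneg hn hGI hα0 hα1 s i
    nlinarith [mul_nonneg (mul_nonneg (le_of_lt hβ0) h3) h2]

lemma p01D_nonneg (hn : 0 < n) (hGI : ∀ i, (GI.neighborFinset i).Nonempty)
    (hα0 : 0 ≤ α) (hα1 : α ≤ 1) (hβ0 : 0 < β) (hβ1 : β < 1) (s : Fin n → Bool) (i : Fin n) :
    0 ≤ p01Dist n GC GI α β (stateVec n s) i := by
  unfold p01Dist
  have := prodD_le_one (GC := GC) hn hGI hα0 hα1 hβ0 hβ1 s i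
  linarith

lemma one_sub_p01D_ge (hn : 0 < n) (hGI : ∀ i, (GI.neighborFinset i).Nonempty)
    (hα0 : 0 ≤ α) (hα1 : α ≤ 1) (hβ0 : 0 < β) (hβ1 : β < 1) (s : Fin n → Bool) (i : Fin n) :
    (1-β)^n ≤ 1 - p01Dist n GC GI α β (stateVec n s) i := by
  unfold p01Dist
  have := prodD_ge (GC := GC) hn hGI hα0 hα1 hβ0 hβ1 s i
  linarith

lemma p01D_le_p01B (hn : 0 < n) (hGI : ∀ i, (GI.neighborFinset i).Nonempty)
    (hα0 : 0 ≤ α) (hα1 : α ≤ 1) (hβ0 : 0 < β) (hβ1 : β < 1) (s : Fin n → Bool) (i : Fin n) :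
    p01Dist n GC GI α β (stateVec n s) i ≤ p01Bench n GC β (stateVec n s) i := by
  unfold p01Dist p01Bench
  have : ∏ j ∈ GC.neighborFinset i, (1 - β * stateVec n s j)
      ≤ ∏ j ∈ GC.neighborFinset i, (1 - β * distAction n GI α (stateVec n s) i * stateVec n s j) := by
    apply Finset.prod_le_prod
    · intro j _; nlinarith [sv_le_one s j, sv_nonneg s j]
    · intro j _
      have h2 := sv_nonneg s j
      have h4 := act_le_one (GI := GI) hα0 hα1 s i
      have key : β * (distAction n GI α (stateVec n s) i * stateVec n s j) ≤ β * stateVec n s j :=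
        mul_le_mul_of_nonneg_left (mul_le_of_le_one_left h2 h4) (le_of_lt hβ0)
      nlinarith [key]
  linarith

lemma p01D_le_p01B_of_le (hn : 0 < n) (hGI : ∀ i, (GI.neighborFinset i).Nonempty)
    (hα0 : 0 ≤ α) (hα1 : α ≤ 1) (hβ0 : 0 < β) (hβ1 : β < 1)
    {x y : Fin n → Bool} (h : x ≤ y) (i : Fin n) :
    p01Dist n GC GI α β (stateVec n x) i ≤ p01Bench n GC β (stateVec n y) i :=
  le_trans (p01D_le_p01B hn hGI hα0 hα1 hβ0 hβ1 x i) (p01B_mono hβ0 hβ1 h i)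

lemma p01D_allSusc (i : Fin n) : p01Dist n GC GI α β (stateVec n (allSusc n)) i = 0 := by
  unfold p01Dist
  have : ∀ j ∈ GC.neighborFinset i, (1 - β * distAction n GI α (stateVec n (allSusc n)) i * stateVec n (allSusc n) j) = 1 := by
    intro j _; rw [sv_allSusc]; ring
  rw [Finset.prod_congr rfl this]
  simp


/-! ### Node-level lemmas -/

lemma bool_not_le {a b : Bool} (h : ¬ a ≤ b) : a = true ∧ b = false := by
  revert h; revert a b; decide

lemma bool_lt {a b : Bool} (h : b < a) : a = true ∧ b = false := by
  revert h; revert a b; decide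

lemma allSusc_false (i : Fin n) : allSusc n i = false := rfl

lemma nodeBench_nonneg (hβ0 : 0 < β) (hβ1 : β < 1) (hδ0 : 0 < δ) (hδ1 : δ < 1)
    (s : Fin n → Bool) (i : Fin n) (b : Bool) : 0 ≤ nodeBench n GC β δ s i b := by
  have h1 := p01B_nonneg (GC := GC) hβ0 hβ1 s i
  have h2 := p01B_lt_one (GC := GC) hβ0 hβ1 s i
  unfold nodeBench
  cases hs : s i <;> cases b <;> simp <;> nlinarith

lemma nodeBench_sum (s : Fin n → Bool) (i : Fin n) :
    nodeBench n GC β δ s i false + nodeBench n GC β δ s i true = 1 := by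
  unfold nodeBench
  cases hs : s i <;> simp

lemma nodeBench_false_ge (hβ0 : 0 < β) (hβ1 : β < 1) (hδ0 : 0 < δ) (hδ1 : δ < 1)
    (s : Fin n → Bool) (i : Fin n) :
    δ * (1-β)^n ≤ nodeBench n GC β δ s i false := by
  have h1 := one_sub_p01B_ge (GC := GC) hβ0 hβ1 s i
  have h3 : (0:ℝ) < (1-β)^n := pow_pos (by linarith) n
  unfold nodeBench
  cases hs : s i <;> simp
  · nlinarith
  · nlinarith

lemma nodeDist_nonneg (hn : 0 < n) (hGI : ∀ i, (GI.neighborFinset i).Nonempty)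
    (hα0 : 0 ≤ α) (hα1 : α ≤ 1) (hβ0 : 0 < β) (hβ1 : β < 1) (hδ0 : 0 < δ) (hδ1 : δ < 1)
    (s : Fin n → Bool) (i : Fin n) (b : Bool) : 0 ≤ nodeDist n GC GI α β δ s i b := by
  have h1 := p01D_nonneg (GC := GC) hn hGI hα0 hα1 hβ0 hβ1 s i
  have h2 := one_sub_p01D_ge (GC := GC) hn hGI hα0 hα1 hβ0 hβ1 s i
  have h3 : (0:ℝ) < (1-β)^n := pow_pos (by linarith) n
  unfold nodeDist
  cases hs : s i <;> cases b <;> simp <;> nlinarith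

lemma nodeDist_sum (s : Fin n → Bool) (i : Fin n) :
    nodeDist n GC GI α β δ s i false + nodeDist n GC GI α β δ s i true = 1 := by
  unfold nodeDist
  cases hs : s i <;> simp

lemma nodeDist_false_ge (hn : 0 < n) (hGI : ∀ i, (GI.neighborFinset i).Nonempty)
    (hα0 : 0 ≤ α) (hα1 : α ≤ 1) (hβ0 : 0 < β) (hβ1 : β < 1) (hδ0 : 0 < δ) (hδ1 : δ < 1)
    (s : Fin n → Bool) (i : Fin n) :
    δ * (1-β)^n ≤ nodeDist n GC GI α β δ s i false := by
  have h1 := one_sub_p01D_ge (GC := GC) hn hGI hα0 hα1 hβ0 hβ1 s i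
  have h3 : (0:ℝ) < (1-β)^n := pow_pos (by linarith) n
  unfold nodeDist
  cases hs : s i <;> simp
  · nlinarith
  · nlinarith

lemma nodeBench_zero_nodeDist (hn : 0 < n) (hGI : ∀ i, (GI.neighborFinset i).Nonempty)
    (hα0 : 0 ≤ α) (hα1 : α ≤ 1) (hβ0 : 0 < β) (hβ1 : β < 1) (hδ0 : 0 < δ) (hδ1 : δ < 1)
    (s : Fin n → Bool) (i : Fin n) (b : Bool) (h : nodeBench n GC β δ s i b = 0) :
    nodeDist n GC GI α β δ s i b = 0 := by
  have h1 := p01B_lt_one (GC := GC) hβ0 hβ1 s i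
  have h2 := p01D_nonneg (GC := GC) hn hGI hα0 hα1 hβ0 hβ1 s i
  have h4 := p01D_le_p01B (GC := GC) hn hGI hα0 hα1 hβ0 hβ1 s i
  have h0 := p01B_nonneg (GC := GC) hβ0 hβ1 s i
  unfold nodeBench at h
  unfold nodeDist
  cases hs : s i <;> rw [hs] at h <;> cases b <;> simp at h ⊢ <;>
    first
      | linarith
      | (exfalso; rcases h with h|h <;> linarith)
      | (rcases h with h|h
         · exact Or.inl h
         · exact absurd h (by intro hh; nlinarith))
      | (exfalso; nlinarith)
      | nlinarith

lemma nodeCouple_dead (x y : Fin n → Bool) (i : Fin n) (hx : x i = true) (hy : y i = false)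
    (ab : Bool × Bool) : nodeCouple n GC GI α β δ x y i ab = 0 := by
  unfold nodeCouple
  rw [hx, hy]

lemma nodeCouple_true_false (x y : Fin n → Bool) (i : Fin n) :
    nodeCouple n GC GI α β δ x y i (true, false) = 0 := by
  unfold nodeCouple
  cases hx : x i <;> cases hy : y i <;> simp

lemma nodeCouple_rowsum (x y : Fin n → Bool) (i : Fin n) (hxy : x i = true → y i = true)
    (a : Bool) :
    nodeCouple n GC GI α β δ x y i (a, false) + nodeCouple n GC GI α β δ x y i (a, true)
      = nodeDist n GC GI α β δ x i a := by
  unfold nodeCouple nodeDist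
  cases hx : x i
  · cases hy : y i <;> cases a <;> simp <;> ring
  · rw [hxy hx]
    cases a <;> simp <;> ring

lemma nodeCouple_colsum (x y : Fin n → Bool) (i : Fin n) (hxy : x i = true → y i = true)
    (b : Bool) :
    nodeCouple n GC GI α β δ x y i (false, b) + nodeCouple n GC GI α β δ x y i (true, b)
      = nodeBench n GC β δ y i b := by
  unfold nodeCouple nodeBench
  cases hx : x i
  · cases hy : y i <;> cases b <;> simp <;> ring
  · rw [hxy hx]
    cases b <;> simp <;> ring

lemma nodeCouple_nonneg (hn : 0 < n) (hGI : ∀ i, (GI.neighborFinset i).Nonempty)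
    (hα0 : 0 ≤ α) (hα1 : α ≤ 1) (hβ0 : 0 < β) (hβ1 : β < 1) (hδ0 : 0 < δ) (hδ1 : δ < 1)
    {x y : Fin n → Bool} (hxy : x ≤ y) (i : Fin n) (ab : Bool × Bool) :
    0 ≤ nodeCouple n GC GI α β δ x y i ab := by
  have h1 := p01B_nonneg (GC := GC) hβ0 hβ1 y i
  have h2 := p01B_lt_one (GC := GC) hβ0 hβ1 y i
  have h3 := p01D_nonneg (GC := GC) hn hGI hα0 hα1 hβ0 hβ1 x i
  have h4 := p01D_le_p01B_of_le (GC := GC) hn hGI hα0 hα1 hβ0 hβ1 hxy i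
  obtain ⟨a, b⟩ := ab
  unfold nodeCouple
  cases hx : x i
  · cases hy : y i <;> cases a <;> cases b <;> simp <;> nlinarith
  · have hy : y i = true := Bool.le_iff_imp.1 (hxy i) hx
    rw [hy]
    cases a <;> cases b <;> simp <;> nlinarith

lemma nodeCouple_row_vanish (hn : 0 < n) (hGI : ∀ i, (GI.neighborFinset i).Nonempty)
    (hα0 : 0 ≤ α) (hα1 : α ≤ 1) (hβ0 : 0 < β) (hβ1 : β < 1) (hδ0 : 0 < δ) (hδ1 : δ < 1)
    (x y : Fin n → Bool) (i : Fin n) (a b : Bool) (h : nodeBench n GC β δ x i a = 0) :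
    nodeCouple n GC GI α β δ x y i (a, b) = 0 := by
  have h1 := p01B_lt_one (GC := GC) hβ0 hβ1 x i
  have h2 := p01D_nonneg (GC := GC) hn hGI hα0 hα1 hβ0 hβ1 x i
  have h4 := p01D_le_p01B (GC := GC) hn hGI hα0 hα1 hβ0 hβ1 x i
  have h0 := p01B_nonneg (GC := GC) hβ0 hβ1 x i
  have h5 := p01B_nonneg (GC := GC) hβ0 hβ1 y i
  have h6 := p01B_lt_one (GC := GC) hβ0 hβ1 y i
  unfold nodeBench at h
  unfold nodeCouple
  cases hx : x i <;> rw [hx] at h <;> cases hy : y i <;> cases a <;> cases b <;>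
    simp at h ⊢ <;>
    first
      | linarith
      | (exfalso; rcases h with h|h <;> linarith)
      | (rcases h with h|h
         · exact Or.inl h
         · exact absurd h (by intro hh; nlinarith))
      | (exfalso; nlinarith)
      | nlinarith

lemma nodeCouple_col_vanish (hn : 0 < n) (hGI : ∀ i, (GI.neighborFinset i).Nonempty)
    (hα0 : 0 ≤ α) (hα1 : α ≤ 1) (hβ0 : 0 < β) (hβ1 : β < 1) (hδ0 : 0 < δ) (hδ1 : δ < 1)
    {x y : Fin n → Bool} (hxy : x ≤ y) (i : Fin n) (a b : Bool)
    (h : nodeBench n GC β δ y i b = 0) :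
    nodeCouple n GC GI α β δ x y i (a, b) = 0 := by
  have h1 := p01B_lt_one (GC := GC) hβ0 hβ1 y i
  have h2 := p01D_nonneg (GC := GC) hn hGI hα0 hα1 hβ0 hβ1 x i
  have h4 := p01D_le_p01B_of_le (GC := GC) hn hGI hα0 hα1 hβ0 hβ1 hxy i
  have h0 := p01B_nonneg (GC := GC) hβ0 hβ1 y i
  unfold nodeBench at h
  unfold nodeCouple
  cases hx : x i
  · cases hy : y i <;> rw [hy] at h <;> cases a <;> cases b <;> simp at h ⊢ <;>
    first
      | linarith
      | (exfalso; rcases h with h|h <;> linarith)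
      | (rcases h with h|h
         · exact Or.inl h
         · exact absurd h (by intro hh; nlinarith))
      | (exfalso; nlinarith)
      | nlinarith
  · have hy : y i = true := Bool.le_iff_imp.1 (hxy i) hx
    rw [hy] at h ⊢
    cases a <;> cases b <;> simp at h ⊢ <;>
    first
      | linarith
      | (exfalso; rcases h with h|h <;> linarith)
      | (rcases h with h|h
         · exact Or.inl h
         · exact absurd h (by intro hh; nlinarith))
      | (exfalso; nlinarith)
      | nlinarith

/-! ### State-level lemmas -/

lemma Kbench_nonneg (hβ0 : 0 < β) (hβ1 : β < 1) (hδ0 : 0 < δ) (hδ1 : δ < 1)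
    (s v : Fin n → Bool) : 0 ≤ Kbench n GC β δ s v :=
  Finset.prod_nonneg fun i _ => nodeBench_nonneg hβ0 hβ1 hδ0 hδ1 s i (v i)

lemma Kdist_nonneg (hn : 0 < n) (hGI : ∀ i, (GI.neighborFinset i).Nonempty)
    (hα0 : 0 ≤ α) (hα1 : α ≤ 1) (hβ0 : 0 < β) (hβ1 : β < 1) (hδ0 : 0 < δ) (hδ1 : δ < 1)
    (s v : Fin n → Bool) : 0 ≤ Kdist n GC GI α β δ s v :=
  Finset.prod_nonneg fun i _ => nodeDist_nonneg hn hGI hα0 hα1 hβ0 hβ1 hδ0 hδ1 s i (v i)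

lemma sum_bool_prod {f : Fin n → Bool → ℝ} :
    ∑ v : Fin n → Bool, ∏ i, f i (v i) = ∏ i, (f i false + f i true) := by
  classical
  have h := Finset.prod_univ_sum (fun _ : Fin n => (Finset.univ : Finset Bool)) (fun i b => f i b)
  rw [Fintype.piFinset_univ] at h
  rw [← h]
  apply Finset.prod_congr rfl
  intro i _
  rw [Fintype.sum_bool]
  ring

lemma Kbench_sum (s : Fin n → Bool) : ∑ v : Fin n → Bool, Kbench n GC β δ s v = 1 := by
  unfold Kbench
  rw [sum_bool_prod]
  have : ∀ i ∈ Finset.univ, nodeBench n GC β δ s i false + nodeBench n GC β δ s i true = 1 :=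
    fun i _ => nodeBench_sum s i
  rw [Finset.prod_congr rfl this]
  simp

lemma Kdist_sum (s : Fin n → Bool) : ∑ v : Fin n → Bool, Kdist n GC GI α β δ s v = 1 := by
  unfold Kdist
  rw [sum_bool_prod]
  have : ∀ i ∈ Finset.univ, nodeDist n GC GI α β δ s i false + nodeDist n GC GI α β δ s i true = 1 :=
    fun i _ => nodeDist_sum s i
  rw [Finset.prod_congr rfl this]
  simp

lemma stateCouple_sum_snd {x y : Fin n → Bool} (hxy : x ≤ y) (ω : Fin n → Bool) :
    ∑ v : Fin n → Bool, stateCouple n GC GI α β δ x y ω v = Kdist n GC GI α β δ x ω := by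
  unfold stateCouple Kdist
  have h := sum_bool_prod (f := fun i b => nodeCouple n GC GI α β δ x y i (ω i, b))
  rw [h]
  apply Finset.prod_congr rfl
  intro i _
  exact nodeCouple_rowsum x y i (fun hx => Bool.le_iff_imp.1 (hxy i) hx) (ω i)

lemma stateCouple_sum_fst {x y : Fin n → Bool} (hxy : x ≤ y) (v : Fin n → Bool) :
    ∑ ω : Fin n → Bool, stateCouple n GC GI α β δ x y ω v = Kbench n GC β δ y v := by
  unfold stateCouple Kbench
  have h := sum_bool_prod (f := fun i a => nodeCouple n GC GI α β δ x y i (a, v i))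
  rw [h]
  apply Finset.prod_congr rfl
  intro i _
  exact nodeCouple_colsum x y i (fun hx => Bool.le_iff_imp.1 (hxy i) hx) (v i)

lemma stateCouple_dead {x y : Fin n → Bool} (h : ¬ x ≤ y) (ω v : Fin n → Bool) :
    stateCouple n GC GI α β δ x y ω v = 0 := by
  rw [Pi.le_def] at h
  push_neg at h
  obtain ⟨i, hi⟩ := h
  obtain ⟨hx, hy⟩ := bool_lt hi
  exact Finset.prod_eq_zero (Finset.mem_univ i) (nodeCouple_dead x y i hx hy _)

lemma stateCouple_nonneg (hn : 0 < n) (hGI : ∀ i, (GI.neighborFinset i).Nonempty)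
    (hα0 : 0 ≤ α) (hα1 : α ≤ 1) (hβ0 : 0 < β) (hβ1 : β < 1) (hδ0 : 0 < δ) (hδ1 : δ < 1)
    (x y ω v : Fin n → Bool) : 0 ≤ stateCouple n GC GI α β δ x y ω v := by
  by_cases hxy : x ≤ y
  · exact Finset.prod_nonneg fun i _ =>
      nodeCouple_nonneg hn hGI hα0 hα1 hβ0 hβ1 hδ0 hδ1 hxy i _
  · rw [stateCouple_dead hxy]

lemma stateCouple_col_vanish (hn : 0 < n) (hGI : ∀ i, (GI.neighborFinset i).Nonempty)
    (hα0 : 0 ≤ α) (hα1 : α ≤ 1) (hβ0 : 0 < β) (hβ1 : β < 1) (hδ0 : 0 < δ) (hδ1 : δ < 1)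
    (x y ω v : Fin n → Bool) (h : Kbench n GC β δ y v = 0) :
    stateCouple n GC GI α β δ x y ω v = 0 := by
  by_cases hxy : x ≤ y
  · unfold Kbench at h
    obtain ⟨i, _, hi⟩ := Finset.prod_eq_zero_iff.1 h
    exact Finset.prod_eq_zero (Finset.mem_univ i)
      (nodeCouple_col_vanish hn hGI hα0 hα1 hβ0 hβ1 hδ0 hδ1 hxy i _ _ hi)
  · exact stateCouple_dead hxy ω v

lemma stateCouple_row_vanish (hn : 0 < n) (hGI : ∀ i, (GI.neighborFinset i).Nonempty)
    (hα0 : 0 ≤ α) (hα1 : α ≤ 1) (hβ0 : 0 < β) (hβ1 : β < 1) (hδ0 : 0 < δ) (hδ1 : δ < 1)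
    (x y ω v : Fin n → Bool) (h : Kbench n GC β δ x ω = 0) :
    stateCouple n GC GI α β δ x y ω v = 0 := by
  unfold Kbench at h
  obtain ⟨i, _, hi⟩ := Finset.prod_eq_zero_iff.1 h
  exact Finset.prod_eq_zero (Finset.mem_univ i)
    (nodeCouple_row_vanish hn hGI hα0 hα1 hβ0 hβ1 hδ0 hδ1 x y i _ _ hi)

lemma stateCouple_ne_zero_le {x y ω v : Fin n → Bool}
    (h : stateCouple n GC GI α β δ x y ω v ≠ 0) : ω ≤ v := by
  intro i
  by_contra hc
  obtain ⟨ha, hb⟩ := bool_not_le hc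
  apply h
  apply Finset.prod_eq_zero (Finset.mem_univ i)
  rw [ha, hb]
  exact nodeCouple_true_false x y i

lemma Kbench_allSusc_ne (v : Fin n → Bool) (h : v ≠ allSusc n) :
    Kbench n GC β δ (allSusc n) v = 0 := by
  have : ∃ i, v i = true := by
    by_contra hc
    push_neg at hc
    exact h (funext fun i => by simpa [allSusc] using Bool.eq_false_iff.2 (by simpa using hc i))
  obtain ⟨i, hi⟩ := this
  apply Finset.prod_eq_zero (Finset.mem_univ i)
  rw [hi]
  unfold nodeBench
  simp only [allSusc_false]
  simp [p01B_allSusc (GC := GC) (β := β) i]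

lemma Kbench_allSusc_allSusc : Kbench n GC β δ (allSusc n) (allSusc n) = 1 := by
  unfold Kbench
  have : ∀ i ∈ Finset.univ, nodeBench n GC β δ (allSusc n) i (allSusc n i) = 1 := by
    intro i _
    unfold nodeBench
    simp only [allSusc_false]
    simp [p01B_allSusc (GC := GC) (β := β) i]
  rw [Finset.prod_congr rfl this]
  simp

lemma Kdist_allSusc_allSusc : Kdist n GC GI α β δ (allSusc n) (allSusc n) = 1 := by
  unfold Kdist
  have : ∀ i ∈ Finset.univ, nodeDist n GC GI α β δ (allSusc n) i (allSusc n i) = 1 := by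
    intro i _
    unfold nodeDist
    simp only [allSusc_false]
    simp [p01D_allSusc (GC := GC) (GI := GI) (α := α) (β := β) i]
  rw [Finset.prod_congr rfl this]
  simp

lemma Kbench_zero_Kdist (hn : 0 < n) (hGI : ∀ i, (GI.neighborFinset i).Nonempty)
    (hα0 : 0 ≤ α) (hα1 : α ≤ 1) (hβ0 : 0 < β) (hβ1 : β < 1) (hδ0 : 0 < δ) (hδ1 : δ < 1)
    (s v : Fin n → Bool) (h : Kbench n GC β δ s v = 0) : Kdist n GC GI α β δ s v = 0 := by
  unfold Kbench at h
  obtain ⟨i, _, hi⟩ := Finset.prod_eq_zero_iff.1 h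
  exact Finset.prod_eq_zero (Finset.mem_univ i)
    (nodeBench_zero_nodeDist hn hGI hα0 hα1 hβ0 hβ1 hδ0 hδ1 s i (v i) hi)

lemma prod_const_ge {f : Fin n → ℝ} {c : ℝ} (hc : 0 ≤ c) (hf : ∀ i, c ≤ f i) :
    c ^ n ≤ ∏ i, f i := by
  calc c ^ n = ∏ _i : Fin n, c := by rw [Finset.prod_const]; simp
    _ ≤ ∏ i, f i := Finset.prod_le_prod (fun i _ => hc) (fun i _ => hf i)

lemma Kbench_to_zero_ge (hβ0 : 0 < β) (hβ1 : β < 1) (hδ0 : 0 < δ) (hδ1 : δ < 1)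
    (s : Fin n → Bool) :
    (δ * (1-β)^n)^n ≤ Kbench n GC β δ s (allSusc n) := by
  unfold Kbench
  apply prod_const_ge
  · have : (0:ℝ) < (1-β)^n := pow_pos (by linarith) n
    positivity
  · intro i
    have := nodeBench_false_ge (GC := GC) hβ0 hβ1 hδ0 hδ1 s i
    simpa [allSusc] using this

lemma Kdist_to_zero_ge (hn : 0 < n) (hGI : ∀ i, (GI.neighborFinset i).Nonempty)
    (hα0 : 0 ≤ α) (hα1 : α ≤ 1) (hβ0 : 0 < β) (hβ1 : β < 1) (hδ0 : 0 < δ) (hδ1 : δ < 1)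
    (s : Fin n → Bool) :
    (δ * (1-β)^n)^n ≤ Kdist n GC GI α β δ s (allSusc n) := by
  unfold Kdist
  apply prod_const_ge
  · have : (0:ℝ) < (1-β)^n := pow_pos (by linarith) n
    positivity
  · intro i
    have := nodeDist_false_ge (GC := GC) hn hGI hα0 hα1 hβ0 hβ1 hδ0 hδ1 s i
    simpa [allSusc] using this

lemma stateCouple_to_zero_ge (hβ0 : 0 < β) (hβ1 : β < 1) (hδ0 : 0 < δ) (hδ1 : δ < 1)
    (u : Fin n → Bool) :
    (δ * (1-β)^n)^n ≤ stateCouple n GC GI α β δ (allSusc n) u (allSusc n) (allSusc n) := by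
  unfold stateCouple
  apply prod_const_ge
  · have : (0:ℝ) < (1-β)^n := pow_pos (by linarith) n
    positivity
  · intro i
    have h1 := one_sub_p01B_ge (GC := GC) hβ0 hβ1 u i
    have h3 : (0:ℝ) < (1-β)^n := pow_pos (by linarith) n
    unfold nodeCouple
    simp only [allSusc_false]
    cases hu : u i <;> simp <;> nlinarith

lemma stateCouple_zeros :
    stateCouple n GC GI α β δ (allSusc n) (allSusc n) (allSusc n) (allSusc n) = 1 := by
  unfold stateCouple
  have : ∀ i ∈ Finset.univ,
      nodeCouple n GC GI α β δ (allSusc n) (allSusc n) i (allSusc n i, allSusc n i) = 1 := by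
    intro i _
    unfold nodeCouple
    simp only [allSusc_false]
    simp [p01B_allSusc (GC := GC) (β := β) i]
  rw [Finset.prod_congr rfl this]
  simp

lemma eps_pos (hβ0 : 0 < β) (hβ1 : β < 1) (hδ0 : 0 < δ) : 0 < (δ * (1-β)^n)^n := by
  have : (0:ℝ) < (1-β)^n := pow_pos (by linarith) n
  positivity

lemma eps_le_one (hβ0 : 0 < β) (hβ1 : β < 1) (hδ0 : 0 < δ) (hδ1 : δ < 1) :
    (δ * (1-β)^n)^n ≤ 1 := by
  apply pow_le_one₀
  · have : (0:ℝ) < (1-β)^n := pow_pos (by linarith) n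
    positivity
  · have h1 : (1-β)^n ≤ 1 := pow_le_one₀ (by linarith) (by linarith)
    nlinarith


/-! ### Path space basics -/

lemma le_allSusc_eq {u : Fin n → Bool} (h : u ≤ allSusc n) : u = allSusc n := by
  funext i
  have hi := h i
  show u i = false
  cases hu : u i
  · rfl
  · rw [hu] at hi
    have : allSusc n i = true := Bool.le_iff_imp.1 hi rfl
    simp [allSusc] at this

lemma allSusc_le (u : Fin n → Bool) : allSusc n ≤ u := by
  intro i
  unfold allSusc
  exact Bool.false_le _

lemma absTime_mem (g : SamplePath n GC β δ) : g.1 (absTime n GC β δ g) = allSusc n := by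
  have hne : {t | g.1 t = allSusc n}.Nonempty := by
    obtain ⟨T, hT⟩ := g.2.2
    exact ⟨T, hT⟩
  exact Nat.sInf_mem hne

lemma path_stays (g : SamplePath n GC β δ) (t : ℕ) (h : g.1 t = allSusc n) :
    g.1 (t+1) = allSusc n := by
  by_contra hc
  have h0 := g.2.1 t
  rw [h, Kbench_allSusc_ne _ hc] at h0
  exact lt_irrefl 0 h0

lemma absorbed (g : SamplePath n GC β δ) {t : ℕ} (h : absTime n GC β δ g ≤ t) :
    g.1 t = allSusc n := by
  induction t with
  | zero =>
    have h0 : absTime n GC β δ g = 0 := Nat.le_zero.1 h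
    rw [← h0]; exact absTime_mem g
  | succ t ih =>
    rcases Nat.lt_succ_iff_lt_or_eq.1 (Nat.lt_succ_of_le h) with hlt | heq
    · exact path_stays g t (ih (by omega))
    · rw [← heq]; exact absTime_mem g

lemma absTime_le_iff (g : SamplePath n GC β δ) (t : ℕ) :
    absTime n GC β δ g ≤ t ↔ g.1 t = allSusc n :=
  ⟨fun h => absorbed g h, fun h => Nat.sInf_le h⟩

/-- shift a path by one step -/
def shiftPath (g : SamplePath n GC β δ) : SamplePath n GC β δ :=
  ⟨fun t => g.1 (t+1),
   fun t => g.2.1 (t+1),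
   ⟨absTime n GC β δ g, absorbed g (Nat.le_succ _)⟩⟩

@[simp] lemma shiftPath_apply (g : SamplePath n GC β δ) (t : ℕ) :
    (shiftPath g).1 t = g.1 (t+1) := rfl

lemma absTime_shift_le_iff (g : SamplePath n GC β δ) (k : ℕ) :
    absTime n GC β δ (shiftPath g) ≤ k ↔ absTime n GC β δ g ≤ k + 1 := by
  rw [absTime_le_iff, absTime_le_iff]
  exact Iff.rfl

lemma absTime_shift (g : SamplePath n GC β δ) (h : g.1 0 ≠ allSusc n) :
    absTime n GC β δ g = absTime n GC β δ (shiftPath g) + 1 := by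
  have h0 : ¬ absTime n GC β δ g ≤ 0 := fun hh => h (absorbed g hh)
  have a := (absTime_shift_le_iff g (absTime n GC β δ (shiftPath g))).1 le_rfl
  have b := (absTime_shift_le_iff g (absTime n GC β δ g - 1)).2 (by omega)
  omega

/-- prepend a state to a path -/
def prependPath (u : Fin n → Bool) (g : SamplePath n GC β δ)
    (hK : 0 < Kbench n GC β δ u (g.1 0)) : SamplePath n GC β δ :=
  ⟨fun t => Nat.casesOn t u g.1, by
    constructor
    · intro t
      cases t with
      | zero => exact hK
      | succ t => exact g.2.1 t
    · obtain ⟨T, hT⟩ := g.2.2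
      exact ⟨T+1, hT⟩⟩

@[simp] lemma prependPath_zero (u : Fin n → Bool) (g : SamplePath n GC β δ) (hK) :
    (prependPath u g hK).1 0 = u := rfl

@[simp] lemma prependPath_succ (u : Fin n → Bool) (g : SamplePath n GC β δ) (hK) (t : ℕ) :
    (prependPath u g hK).1 (t+1) = g.1 t := rfl

lemma absTime_prepend_le_iff (u : Fin n → Bool) (g : SamplePath n GC β δ) (hK) (k : ℕ) :
    absTime n GC β δ (prependPath u g hK) ≤ k + 1 ↔ absTime n GC β δ g ≤ k := by
  rw [absTime_le_iff, absTime_le_iff]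
  exact Iff.rfl

lemma absTime_prepend (u : Fin n → Bool) (g : SamplePath n GC β δ) (hK)
    (h : u ≠ allSusc n) :
    absTime n GC β δ (prependPath u g hK) = absTime n GC β δ g + 1 := by
  have h0 : ¬ absTime n GC β δ (prependPath u g hK) ≤ 0 := fun hh => h (absorbed _ hh)
  have a := (absTime_prepend_le_iff u g hK (absTime n GC β δ g)).2 le_rfl
  have b := (absTime_prepend_le_iff u g hK (absTime n GC β δ (prependPath u g hK) - 1)).1 (by omega)
  omega

lemma shift_prepend (u : Fin n → Bool) (g : SamplePath n GC β δ) (hK) :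
    shiftPath (prependPath u g hK) = g :=
  Subtype.ext (funext fun _ => rfl)

lemma prepend_shift (g : SamplePath n GC β δ) (hK) :
    prependPath (g.1 0) (shiftPath g) hK = g :=
  Subtype.ext (funext fun t => by cases t <;> rfl)

/-- the constant all-susceptible path -/
def constPath (n : ℕ) (GC : SimpleGraph (Fin n)) [DecidableRel GC.Adj] (β δ : ℝ) :
    SamplePath n GC β δ :=
  ⟨fun _ => allSusc n, by
    constructor
    · intro t
      rw [Kbench_allSusc_allSusc]
      norm_num
    · exact ⟨0, rfl⟩⟩

lemma absTime_const : absTime n GC β δ (constPath n GC β δ) = 0 :=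
  Nat.le_zero.1 ((absTime_le_iff _ 0).2 rfl)

lemma eq_const (g : SamplePath n GC β δ) (h : g.1 0 = allSusc n) : g = constPath n GC β δ :=
  Subtype.ext (funext fun t => absorbed g (le_trans (Nat.le_zero.1 ((absTime_le_iff g 0).2 h)).le (Nat.zero_le t)))

end Aux

/-- paths starting at `u` absorbed by time `m` -/
abbrev PathsLE (n : ℕ) (GC : SimpleGraph (Fin n)) [DecidableRel GC.Adj] (β δ : ℝ)
    (m : ℕ) (u : Fin n → Bool) : Type :=
  {g : SamplePath n GC β δ // g.1 0 = u ∧ absTime n GC β δ g ≤ m}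

instance PathsLE.finite (n : ℕ) (GC : SimpleGraph (Fin n)) [DecidableRel GC.Adj] (β δ : ℝ)
    (m : ℕ) (u : Fin n → Bool) : Finite (PathsLE n GC β δ m u) := by
  apply Finite.of_injective (fun g : PathsLE n GC β δ m u => (fun i : Fin (m+1) => g.1.1 i.val))
  intro g g' he
  apply Subtype.ext
  apply Subtype.ext
  funext t
  rcases le_or_gt t m with ht | ht
  · have := congrFun he ⟨t, by omega⟩
    simpa using this
  · rw [absorbed g.1 (le_trans g.2.2 ht.le), absorbed g'.1 (le_trans g'.2.2 ht.le)]

noncomputable instance PathsLE.fintype (n : ℕ) (GC : SimpleGraph (Fin n)) [DecidableRel GC.Adj]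
    (β δ : ℝ) (m : ℕ) (u : Fin n → Bool) : Fintype (PathsLE n GC β δ m u) :=
  Fintype.ofFinite _




section MLcore

variable {n : ℕ} {GC : SimpleGraph (Fin n)} [DecidableRel GC.Adj] {β δ : ℝ}

/-- truncated value recursion for the master lemma -/
noncomputable def mlS (W : ℕ → (Fin n → Bool) → (Fin n → Bool) → ℝ) (S : ℕ) :
    ℕ → ℕ → (Fin n → Bool) → ℝ
  | 0, t, u => if S ≤ t ∧ u = allSusc n then 1 else 0
  | (m+1), t, u =>
      if S ≤ t ∧ u = allSusc n then 1
      else ∑ v, W t u v * mlS W S m (t+1) v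

/-- extended path weight -/
noncomputable def fbar (W : ℕ → (Fin n → Bool) → (Fin n → Bool) → ℝ) (S : ℕ)
    (t : ℕ) (g : SamplePath n GC β δ) : ℝ :=
  ∏ r ∈ Finset.range (max (absTime n GC β δ g) (S - t)), W (t+r) (g.1 r) (g.1 (r+1))

/-- truncated products over `Ico` -/
noncomputable def mlA (d : ℕ → ℝ) (S t : ℕ) : ℝ := ∏ r ∈ Finset.Ico t S, d r

lemma mlA_nonneg {d : ℕ → ℝ} (hd : ∀ t, 0 ≤ d t) (S t : ℕ) : 0 ≤ mlA d S t :=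
  Finset.prod_nonneg fun r _ => hd r

lemma mlA_of_ge {d : ℕ → ℝ} {S t : ℕ} (h : S ≤ t) : mlA d S t = 1 := by
  unfold mlA
  rw [Finset.Ico_eq_empty (by omega)]
  simp

lemma mlA_step {d : ℕ → ℝ} {S t : ℕ} (h : t < S) : mlA d S t = d t * mlA d S (t+1) :=
  Finset.prod_eq_prod_Ico_succ_bot h d

lemma fbar_nonneg {W : ℕ → (Fin n → Bool) → (Fin n → Bool) → ℝ} {S : ℕ}
    (hW1 : ∀ t u v, 0 ≤ W t u v) (t : ℕ) (g : SamplePath n GC β δ) :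
    0 ≤ fbar W S t g :=
  Finset.prod_nonneg fun r _ => hW1 _ _ _

lemma fbar_const (W : ℕ → (Fin n → Bool) → (Fin n → Bool) → ℝ) {S t : ℕ} (h : S ≤ t) :
    fbar W S t (constPath n GC β δ) = 1 := by
  unfold fbar
  rw [absTime_const]
  have : max 0 (S - t) = 0 := by omega
  rw [this]
  simp

lemma fbar_peel (W : ℕ → (Fin n → Bool) → (Fin n → Bool) → ℝ) {S : ℕ}
    (g : SamplePath n GC β δ) (t : ℕ)
    (h : 1 ≤ absTime n GC β δ g ∨ t < S) :
    fbar W S t g = W t (g.1 0) (g.1 1) * fbar W S (t+1) (shiftPath g) := by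
  have hM : max (absTime n GC β δ g) (S - t)
      = max (absTime n GC β δ (shiftPath g)) (S - (t+1)) + 1 := by
    rcases em (g.1 0 = allSusc n) with h0 | h0
    · have e1 : absTime n GC β δ g = 0 := Nat.le_zero.1 ((absTime_le_iff g 0).2 h0)
      have e2 : absTime n GC β δ (shiftPath g) = 0 :=
        Nat.le_zero.1 ((absTime_le_iff _ 0).2 (path_stays g 0 h0))
      rcases h with h | h
      · omega
      · omega
    · have e1 : absTime n GC β δ g = absTime n GC β δ (shiftPath g) + 1 := absTime_shift g h0
      omega
  unfold fbar
  rw [hM, Finset.prod_range_succ', mul_comm]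
  have h2 : ∀ r ∈ Finset.range (max (absTime n GC β δ (shiftPath g)) (S - (t+1))),
      W (t+(r+1)) (g.1 (r+1)) (g.1 (r+1+1))
        = W ((t+1)+r) ((shiftPath g).1 r) ((shiftPath g).1 (r+1)) := by
    intro r _
    have h1 : t + (r+1) = (t+1)+r := by omega
    rw [h1]
    rfl
  rw [Finset.prod_congr rfl h2]
  norm_num

lemma fbar_zero (W : ℕ → (Fin n → Bool) → (Fin n → Bool) → ℝ) (S : ℕ)
    (g : SamplePath n GC β δ) :
    fbar W S 0 g = ∏ r ∈ Finset.range (max (absTime n GC β δ g) S),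
      W r (g.1 r) (g.1 (r+1)) := by
  unfold fbar
  rw [Nat.sub_zero]
  exact Finset.prod_congr rfl fun r _ => by rw [Nat.zero_add]

lemma mlS_done {W : ℕ → (Fin n → Bool) → (Fin n → Bool) → ℝ} {S : ℕ} (m t : ℕ)
    {u : Fin n → Bool} (hS : S ≤ t) (hu : u = allSusc n) : mlS W S m t u = 1 := by
  cases m <;> simp only [mlS] <;> rw [if_pos ⟨hS, hu⟩]

lemma mlS_nonneg {W : ℕ → (Fin n → Bool) → (Fin n → Bool) → ℝ} {S : ℕ}
    (hW1 : ∀ t u v, 0 ≤ W t u v) :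
    ∀ m t u, 0 ≤ mlS W S m t u := by
  intro m
  induction m with
  | zero =>
    intro t u
    simp only [mlS]
    split <;> norm_num
  | succ m IH =>
    intro t u
    simp only [mlS]
    split
    · norm_num
    · exact Finset.sum_nonneg fun v _ => mul_nonneg (hW1 _ _ _) (IH (t+1) v)


lemma mlS_le_succ {W : ℕ → (Fin n → Bool) → (Fin n → Bool) → ℝ} {S : ℕ}
    (hW1 : ∀ t u v, 0 ≤ W t u v) :
    ∀ m t u, mlS W S m t u ≤ mlS W S (m+1) t u := by
  intro m
  induction m with
  | zero =>
    intro t u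
    by_cases hd : S ≤ t ∧ u = allSusc n
    · simp only [mlS]
      rw [if_pos hd, if_pos hd]
    · simp only [mlS]
      rw [if_neg hd, if_neg hd]
      exact Finset.sum_nonneg fun v _ =>
        mul_nonneg (hW1 _ _ _) (mlS_nonneg hW1 0 (t+1) v)
  | succ m IH =>
    intro t u
    by_cases hd : S ≤ t ∧ u = allSusc n
    · simp only [mlS]
      rw [if_pos hd, if_pos hd]
    · simp only [mlS]
      rw [if_neg hd, if_neg hd]
      exact Finset.sum_le_sum fun v _ =>
        mul_le_mul_of_nonneg_left (IH (t+1) v) (hW1 _ _ _)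

lemma mlS_le_of_le {W : ℕ → (Fin n → Bool) → (Fin n → Bool) → ℝ} {S : ℕ}
    (hW1 : ∀ t u v, 0 ≤ W t u v) {m m' : ℕ} (h : m ≤ m') (t : ℕ) (u : Fin n → Bool) :
    mlS W S m t u ≤ mlS W S m' t u := by
  induction m' with
  | zero =>
    have : m = 0 := by omega
    rw [this]
  | succ m' IH =>
    rcases Nat.lt_succ_iff_lt_or_eq.1 (Nat.lt_succ_of_le h) with hlt | heq
    · exact le_trans (IH (by omega)) (mlS_le_succ hW1 m' t u)
    · rw [heq]

set_option maxHeartbeats 1000000 in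
lemma mlS_eq_sum (hβ0 : 0 < β) (hβ1 : β < 1) (hδ0 : 0 < δ) (hδ1 : δ < 1)
    (W : ℕ → (Fin n → Bool) → (Fin n → Bool) → ℝ) (S : ℕ)
    (hW0 : ∀ t u v, Kbench n GC β δ u v = 0 → W t u v = 0) :
    ∀ m t u, S ≤ t + m →
      mlS W S m t u = ∑ g : PathsLE n GC β δ m u, fbar W S t g.1 := by
  intro m
  induction m with
  | zero =>
    intro t u ht
    have hS : S ≤ t := by omega
    by_cases hu : u = allSusc n
    · subst hu
      rw [mlS_done 0 t hS rfl]
      rw [Fintype.sum_eq_single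
        (⟨constPath n GC β δ, rfl, le_of_eq absTime_const⟩ : PathsLE n GC β δ 0 (allSusc n))]
      · rw [fbar_const W hS]
      · intro x hx
        exact absurd (Subtype.ext (eq_const x.1 x.2.1)) hx
    · simp only [mlS]
      rw [if_neg (fun hh => hu hh.2)]
      haveI : IsEmpty (PathsLE n GC β δ 0 u) :=
        ⟨fun x => hu (by rw [← x.2.1]; exact absorbed x.1 x.2.2)⟩
      rw [Finset.univ_eq_empty, Finset.sum_empty]
  | succ m IH =>
    intro t u ht
    by_cases hd : S ≤ t ∧ u = allSusc n
    · obtain ⟨hS, hu⟩ := hd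
      subst hu
      rw [mlS_done (m+1) t hS rfl]
      rw [Fintype.sum_eq_single
        (⟨constPath n GC β δ, rfl, le_trans (le_of_eq absTime_const) (Nat.zero_le _)⟩ :
          PathsLE n GC β δ (m+1) (allSusc n))]
      · rw [fbar_const W hS]
      · intro x hx
        exact absurd (Subtype.ext (eq_const x.1 x.2.1)) hx
    · simp only [mlS]
      rw [if_neg hd]
      have hrec : ∀ v, mlS W S m (t+1) v = ∑ g : PathsLE n GC β δ m v, fbar W S (t+1) g.1 :=
        fun v => IH (t+1) v (by omega)
      have step1 : ∑ v, W t u v * mlS W S m (t+1) v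
          = ∑ p : (Σ v : Fin n → Bool, PathsLE n GC β δ m v),
              W t u p.1 * fbar W S (t+1) p.2.1 := by
        calc ∑ v, W t u v * mlS W S m (t+1) v
            = ∑ v, ∑ g : PathsLE n GC β δ m v, W t u v * fbar W S (t+1) g.1 := by
              apply Finset.sum_congr rfl
              intro v _
              rw [hrec v, Finset.mul_sum]
          _ = _ := by rw [← Finset.univ_sigma_univ, Finset.sum_sigma]
      rw [step1]
      -- positivity of the needed transitions
      have hKpos : ∀ (p : Σ v : Fin n → Bool, PathsLE n GC β δ m v),
          W t u p.1 * fbar W S (t+1) p.2.1 ≠ 0 → 0 < Kbench n GC β δ u (p.2.1.1 0) := by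
        intro p hne
        have hWne : W t u p.1 ≠ 0 := fun h0 => hne (by rw [h0, zero_mul])
        have hKne : Kbench n GC β δ u p.1 ≠ 0 := fun h0 => hWne (hW0 t u p.1 h0)
        rw [p.2.2.1]
        exact lt_of_le_of_ne (Kbench_nonneg hβ0 hβ1 hδ0 hδ1 u p.1) (Ne.symm hKne)
      -- the peel condition for prepended paths
      have hcond : ∀ (G : SamplePath n GC β δ), G.1 0 = u →
          (1 ≤ absTime n GC β δ G ∨ t < S) := by
        intro G hG0
        rcases Nat.lt_or_ge t S with hlt | hge
        · exact Or.inr hlt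
        · left
          have hu : u ≠ allSusc n := fun hh => hd ⟨hge, hh⟩
          by_contra hc
          exact hu (by rw [← hG0]; exact absorbed G (by omega))
      apply Finset.sum_bij_ne_zero
        (i := fun p _ hne =>
          (⟨prependPath u p.2.1 (hKpos p hne), rfl,
            (absTime_prepend_le_iff u p.2.1 (hKpos p hne) m).2 p.2.2.2⟩ :
              PathsLE n GC β δ (m+1) u))
      · intro p h1 h2
        exact Finset.mem_univ _
      · intro p1 h11 h12 p2 h21 h22 he
        have hfun : ∀ r, p1.2.1.1 r = p2.2.1.1 r := fun r =>
          congrFun (congrArg (fun z : PathsLE n GC β δ (m+1) u => z.1.1) he) (r+1)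
        have hpath : p1.2.1 = p2.2.1 := Subtype.ext (funext hfun)
        have hv : p1.1 = p2.1 := by rw [← p1.2.2.1, ← p2.2.2.1, hfun 0]
        rcases p1 with ⟨v1, g1⟩
        rcases p2 with ⟨v2, g2⟩
        dsimp at hv hpath
        subst hv
        exact congrArg (Sigma.mk v1) (Subtype.ext hpath)
      · intro b _ hgb
        have hpeel := fbar_peel W b.1 t (hcond b.1 b.2.1)
        rw [b.2.1] at hpeel
        have hmem : (shiftPath b.1).1 0 = b.1.1 1 := rfl
        refine ⟨⟨b.1.1 1, ⟨shiftPath b.1, hmem, (absTime_shift_le_iff b.1 m).2 b.2.2⟩⟩,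
          Finset.mem_univ _, ?_, ?_⟩
        · intro h0
          exact hgb (by rw [hpeel]; exact h0)
        · apply Subtype.ext
          apply Subtype.ext
          funext r
          cases r with
          | zero => exact b.2.1.symm
          | succ r => rfl
      · intro p h1 hne
        have hpeel := fbar_peel W (prependPath u p.2.1 (hKpos p hne)) t
          (hcond _ rfl)
        rw [hpeel, shift_prepend]
        have e2 : (prependPath u p.2.1 (hKpos p hne)).1 1 = p.1 := p.2.2.1
        rw [prependPath_zero, e2]


section Bounds

variable {W : ℕ → (Fin n → Bool) → (Fin n → Bool) → ℝ} {d : ℕ → ℝ} {S : ℕ}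
variable {L : ℕ → (Fin n → Bool) → Prop} {ε : ℝ}

lemma mlS_le_A
    (hW1 : ∀ t u v, 0 ≤ W t u v)
    (HL3 : ∀ t u, L t u → ∑ v, W t u v = d t)
    (HL4 : ∀ t u v, L t u → W t u v ≠ 0 → L (t+1) v)
    (H5 : ∀ t, S ≤ t → d t = 1)
    (hd : ∀ t, 0 ≤ d t) :
    ∀ m t u, L t u → mlS W S m t u ≤ mlA d S t := by
  intro m
  induction m with
  | zero =>
    intro t u hL
    simp only [mlS]
    split
    · next hdone => rw [mlA_of_ge hdone.1]
    · exact mlA_nonneg hd S t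
  | succ m IH =>
    intro t u hL
    by_cases hdone : S ≤ t ∧ u = allSusc n
    · simp only [mlS]
      rw [if_pos hdone, mlA_of_ge hdone.1]
    · simp only [mlS]
      rw [if_neg hdone]
      have h1 : ∑ v, W t u v * mlS W S m (t+1) v ≤ ∑ v, W t u v * mlA d S (t+1) := by
        apply Finset.sum_le_sum
        intro v _
        by_cases hw : W t u v = 0
        · rw [hw, zero_mul, zero_mul]
        · exact mul_le_mul_of_nonneg_left (IH (t+1) v (HL4 t u v hL hw)) (hW1 _ _ _)
      have h2 : ∑ v, W t u v * mlA d S (t+1) = d t * mlA d S (t+1) := by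
        rw [← Finset.sum_mul, HL3 t u hL]
      rcases Nat.lt_or_ge t S with hlt | hge
      · rw [← mlA_step hlt] at h2
        linarith
      · rw [H5 t hge, mlA_of_ge (by omega : S ≤ t + 1), mlA_of_ge hge] at *
        linarith

lemma mlS_ge_base
    (hW1 : ∀ t u v, 0 ≤ W t u v)
    (HL3 : ∀ t u, L t u → ∑ v, W t u v = d t)
    (HL4 : ∀ t u v, L t u → W t u v ≠ 0 → L (t+1) v)
    (H5 : ∀ t, S ≤ t → d t = 1)
    (H7 : ∀ t u, S ≤ t → L t u → ε ≤ W t u (allSusc n))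
    (hε0 : 0 < ε) (hε1 : ε ≤ 1) :
    ∀ k t u, S ≤ t → L t u → 1 - (1-ε)^k ≤ mlS W S k t u := by
  intro k
  induction k with
  | zero =>
    intro t u hS hL
    rw [pow_zero]
    have := mlS_nonneg (S := S) hW1 0 t u
    linarith
  | succ k IH =>
    intro t u hS hL
    have hq : (0:ℝ) ≤ (1-ε)^k := pow_nonneg (by linarith) k
    have hq1 : (0:ℝ) ≤ (1-ε)^(k+1) := pow_nonneg (by linarith) (k+1)
    by_cases hu : u = allSusc n
    · rw [mlS_done (k+1) t hS hu]
      linarith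
    · simp only [mlS]
      rw [if_neg (fun hh => hu hh.2)]
      have hterm : ∀ v : Fin n → Bool,
          W t u v * ((1 - (1-ε)^k) + (if v = allSusc n then (1-ε)^k else 0))
            ≤ W t u v * mlS W S k (t+1) v := by
        intro v
        by_cases hw : W t u v = 0
        · rw [hw, zero_mul, zero_mul]
        · apply mul_le_mul_of_nonneg_left _ (hW1 _ _ _)
          by_cases hv : v = allSusc n
          · rw [if_pos hv, mlS_done k (t+1) (by omega) hv]
            linarith
          · rw [if_neg hv]
            have := IH (t+1) v (by omega) (HL4 t u v hL hw)
            linarith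
      have hsum : ∑ v, W t u v * ((1 - (1-ε)^k) + (if v = allSusc n then (1-ε)^k else 0))
          = d t * (1 - (1-ε)^k) + W t u (allSusc n) * (1-ε)^k := by
        have e1 : ∀ v ∈ Finset.univ,
            W t u v * ((1 - (1-ε)^k) + (if v = allSusc n then (1-ε)^k else 0))
            = W t u v * (1 - (1-ε)^k)
              + (if v = allSusc n then W t u v * (1-ε)^k else 0) := by
          intro v _
          split <;> ring
        rw [Finset.sum_congr rfl e1, Finset.sum_add_distrib, ← Finset.sum_mul, HL3 t u hL,
          Finset.sum_ite_eq' Finset.univ (allSusc n) (fun v => W t u v * (1-ε)^k)]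
        simp
      calc 1 - (1-ε)^(k+1) = 1 * (1 - (1-ε)^k) + ε * (1-ε)^k := by rw [pow_succ]; ring
        _ ≤ d t * (1 - (1-ε)^k) + W t u (allSusc n) * (1-ε)^k := by
            rw [H5 t hS]
            have h7 := H7 t u hS hL
            nlinarith
        _ = ∑ v, W t u v * ((1 - (1-ε)^k) + (if v = allSusc n then (1-ε)^k else 0)) :=
            hsum.symm
        _ ≤ ∑ v, W t u v * mlS W S k (t+1) v := Finset.sum_le_sum fun v _ => hterm v

lemma mlS_ge
    (hW1 : ∀ t u v, 0 ≤ W t u v)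
    (HL3 : ∀ t u, L t u → ∑ v, W t u v = d t)
    (HL4 : ∀ t u v, L t u → W t u v ≠ 0 → L (t+1) v)
    (H5 : ∀ t, S ≤ t → d t = 1)
    (H7 : ∀ t u, S ≤ t → L t u → ε ≤ W t u (allSusc n))
    (hd : ∀ t, 0 ≤ d t)
    (hε0 : 0 < ε) (hε1 : ε ≤ 1) :
    ∀ r k t u, S ≤ t + r → L t u →
      mlA d S t * (1 - (1-ε)^k) ≤ mlS W S (r+k) t u := by
  intro r
  induction r with
  | zero =>
    intro k t u hS hL
    rw [mlA_of_ge (by omega), one_mul, zero_add]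
    exact mlS_ge_base hW1 HL3 HL4 H5 H7 hε0 hε1 k t u (by omega) hL
  | succ r IH =>
    intro k t u hSt hL
    rcases Nat.lt_or_ge t S with hS | hS
    · have hd' : ¬ (S ≤ t ∧ u = allSusc n) := fun hh => absurd hh.1 (by omega)
      rw [show r + 1 + k = (r + k) + 1 by omega]
      simp only [mlS]
      rw [if_neg hd']
      have hterm : ∀ v : Fin n → Bool,
          W t u v * (mlA d S (t+1) * (1 - (1-ε)^k)) ≤ W t u v * mlS W S (r+k) (t+1) v := by
        intro v
        by_cases hw : W t u v = 0
        · rw [hw, zero_mul, zero_mul]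
        · exact mul_le_mul_of_nonneg_left
            (IH k (t+1) v (by omega) (HL4 t u v hL hw)) (hW1 _ _ _)
      calc mlA d S t * (1 - (1-ε)^k)
          = d t * (mlA d S (t+1) * (1 - (1-ε)^k)) := by rw [mlA_step hS]; ring
        _ = ∑ v, W t u v * (mlA d S (t+1) * (1 - (1-ε)^k)) := by
            rw [← Finset.sum_mul, HL3 t u hL]
        _ ≤ ∑ v, W t u v * mlS W S (r+k) (t+1) v := Finset.sum_le_sum fun v _ => hterm v
    · rw [mlA_of_ge hS, one_mul]
      calc 1 - (1-ε)^k ≤ mlS W S k t u := mlS_ge_base hW1 HL3 HL4 H5 H7 hε0 hε1 k t u hS hL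
        _ ≤ mlS W S (r+1+k) t u := mlS_le_of_le hW1 (by omega) t u

lemma MLcore_hasSum (hβ0 : 0 < β) (hβ1 : β < 1) (hδ0 : 0 < δ) (hδ1 : δ < 1)
    (hW1 : ∀ t u v, 0 ≤ W t u v)
    (hW0 : ∀ t u v, Kbench n GC β δ u v = 0 → W t u v = 0)
    (HL3 : ∀ t u, L t u → ∑ v, W t u v = d t)
    (HL4 : ∀ t u v, L t u → W t u v ≠ 0 → L (t+1) v)
    (H5 : ∀ t, S ≤ t → d t = 1)
    (H7 : ∀ t u, S ≤ t → L t u → ε ≤ W t u (allSusc n))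
    (hd : ∀ t, 0 ≤ d t)
    (hε0 : 0 < ε) (hε1 : ε ≤ 1)
    (u0 : Fin n → Bool) (hL0 : L 0 u0) :
    HasSum (fun g : {g : SamplePath n GC β δ // g.1 0 = u0} => fbar W S 0 g.1)
      (∏ r ∈ Finset.range S, d r) := by
  classical
  have hA0 : mlA d S 0 = ∏ r ∈ Finset.range S, d r := by
    unfold mlA
    rw [Finset.range_eq_Ico]
  rw [← hA0]
  apply hasSum_of_isLUB_of_nonneg
  · intro g
    exact fbar_nonneg hW1 0 g.1
  constructor
  · rintro x ⟨F, rfl⟩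
    set m := max S (F.sup fun g => absTime n GC β δ g.1) with hm
    have hSm : S ≤ 0 + m := by omega
    have hle : ∑ g ∈ F, fbar W S 0 g.1 ≤ mlS W S m 0 u0 := by
      rw [mlS_eq_sum hβ0 hβ1 hδ0 hδ1 W S hW0 m 0 u0 hSm]
      have hι : ∀ g : {x // x ∈ F}, absTime n GC β δ g.1.1 ≤ m := by
        intro g
        exact le_trans (Finset.le_sup (f := fun g : {g : SamplePath n GC β δ // g.1 0 = u0} =>
          absTime n GC β δ g.1) g.2) (le_max_right _ _)
      calc ∑ g ∈ F, fbar W S 0 g.1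
          = ∑ g ∈ F.attach, fbar W S 0 g.1.1 := (Finset.sum_attach F _).symm
        _ = ∑ x ∈ F.attach.image (fun g : {x // x ∈ F} =>
              (⟨g.1.1, g.1.2, hι g⟩ : PathsLE n GC β δ m u0)), fbar W S 0 x.1 := by
            rw [Finset.sum_image]
            intro x _ y _ hxy
            have : x.1.1 = y.1.1 := congrArg (fun z : PathsLE n GC β δ m u0 => z.1) hxy
            exact Subtype.ext (Subtype.ext this)
        _ ≤ ∑ x : PathsLE n GC β δ m u0, fbar W S 0 x.1 :=
            Finset.sum_le_sum_of_subset_of_nonneg (Finset.subset_univ _)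
              (fun x _ _ => fbar_nonneg hW1 0 x.1)
    exact le_trans hle (mlS_le_A hW1 HL3 HL4 H5 hd m 0 u0 hL0)
  · intro b hb
    have key : ∀ k : ℕ, mlA d S 0 * (1 - (1-ε)^k) ≤ b := by
      intro k
      have h1 : mlA d S 0 * (1-(1-ε)^k) ≤ mlS W S (S + k) 0 u0 :=
        mlS_ge hW1 HL3 HL4 H5 H7 hd hε0 hε1 S k 0 u0 (by omega) hL0
      have h2 : mlS W S (S+k) 0 u0
          = ∑ g ∈ (Finset.univ.image (fun x : PathsLE n GC β δ (S+k) u0 =>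
              (⟨x.1, x.2.1⟩ : {g : SamplePath n GC β δ // g.1 0 = u0}))), fbar W S 0 g.1 := by
        rw [mlS_eq_sum hβ0 hβ1 hδ0 hδ1 W S hW0 (S+k) 0 u0 (by omega)]
        rw [Finset.sum_image]
        intro x _ y _ hxy
        have : x.1 = y.1 := congrArg (fun z : {g : SamplePath n GC β δ // g.1 0 = u0} => z.1) hxy
        exact Subtype.ext this
      have h3 : ∑ g ∈ (Finset.univ.image (fun x : PathsLE n GC β δ (S+k) u0 =>
          (⟨x.1, x.2.1⟩ : {g : SamplePath n GC β δ // g.1 0 = u0}))), fbar W S 0 g.1 ≤ b :=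
        hb ⟨_, rfl⟩
      linarith
    have hten : Filter.Tendsto (fun k : ℕ => mlA d S 0 * (1 - (1-ε)^k))
        Filter.atTop (nhds (mlA d S 0)) := by
      have h0 : Filter.Tendsto (fun k : ℕ => (1-ε)^k) Filter.atTop (nhds 0) :=
        tendsto_pow_atTop_nhds_zero_of_lt_one (by linarith) (by linarith)
      have h1 := (tendsto_const_nhds (x := (1:ℝ)) (f := Filter.atTop (α := ℕ))).sub h0
      have h2 := h1.const_mul (mlA d S 0)
      simpa using h2
    exact le_of_tendsto' hten key

end Bounds

end MLcore


section Final

variable {n : ℕ} {GC GI : SimpleGraph (Fin n)} [DecidableRel GC.Adj] [DecidableRel GI.Adj]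
variable {α β δ : ℝ}

lemma hasSum_of_fibers {F : SamplePath n GC β δ → ℝ} {c : (Fin n → Bool) → ℝ}
    (hf : ∀ u : Fin n → Bool,
      HasSum (fun g : {g : SamplePath n GC β δ // g.1 0 = u} => F g.1) (c u)) :
    HasSum F (∑ u, c u) := by
  have h1 : ∀ u, HasSum (Set.indicator {g : SamplePath n GC β δ | g.1 0 = u} F) (c u) := by
    intro u
    exact (hasSum_subtype_iff_indicator (s := {g : SamplePath n GC β δ | g.1 0 = u})).1 (hf u)
  have h2 := hasSum_sum (s := Finset.univ)
    (f := fun u g => Set.indicator {g' : SamplePath n GC β δ | g'.1 0 = u} F g)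
    (a := c) (fun u _ => h1 u)
  convert h2 using 1
  funext g
  rw [Finset.sum_eq_single (g.1 0)]
  · exact (Set.indicator_of_mem (show g ∈ {g' : SamplePath n GC β δ | g'.1 0 = g.1 0} from rfl) F).symm
  · intro u _ hu
    exact Set.indicator_of_notMem (fun hgu => hu hgu.symm) _
  · intro hg
    exact absurd (Finset.mem_univ _) hg

lemma tsum_subtype_eq_of_support {F : SamplePath n GC β δ → ℝ}
    {s : Set (SamplePath n GC β δ)} (hs : ∀ g, g ∉ s → F g = 0) :
    ∑' g : s, F g.1 = ∑' g, F g := by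
  rw [_root_.tsum_subtype]
  apply tsum_congr
  intro g
  by_cases hg : g ∈ s
  · rw [Set.indicator_of_mem hg]
  · rw [Set.indicator_of_notMem hg, hs g hg]

lemma hasSum_nu_fiber (hn : 0 < n) (hGI : ∀ i, (GI.neighborFinset i).Nonempty)
    (hα0 : 0 ≤ α) (hα1 : α ≤ 1) (hβ0 : 0 < β) (hβ1 : β < 1) (hδ0 : 0 < δ) (hδ1 : δ < 1)
    (u0 : Fin n → Bool) :
    HasSum (fun g : {g : SamplePath n GC β δ // g.1 0 = u0} =>
        ∏ t ∈ Finset.range (absTime n GC β δ g.1),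
          Kdist n GC GI α β δ (g.1.1 t) (g.1.1 (t+1))) 1 := by
  have core := MLcore_hasSum (W := fun _ u v => Kdist n GC GI α β δ u v)
    (d := fun _ => 1) (S := 0) (L := fun _ _ => True) (ε := (δ*(1-β)^n)^n)
    hβ0 hβ1 hδ0 hδ1
    (fun t u v => Kdist_nonneg hn hGI hα0 hα1 hβ0 hβ1 hδ0 hδ1 u v)
    (fun t u v h0 => Kbench_zero_Kdist hn hGI hα0 hα1 hβ0 hβ1 hδ0 hδ1 u v h0)
    (fun t u _ => Kdist_sum u)
    (fun t u v _ _ => trivial)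
    (fun t _ => rfl)
    (fun t u _ _ => Kdist_to_zero_ge hn hGI hα0 hα1 hβ0 hβ1 hδ0 hδ1 u)
    (fun t => by norm_num)
    (eps_pos hβ0 hβ1 hδ0) (eps_le_one hβ0 hβ1 hδ0 hδ1) u0 trivial
  have e : (fun g : {g : SamplePath n GC β δ // g.1 0 = u0} =>
      fbar (fun _ u v => Kdist n GC GI α β δ u v) 0 0 g.1)
      = fun g => ∏ t ∈ Finset.range (absTime n GC β δ g.1),
          Kdist n GC GI α β δ (g.1.1 t) (g.1.1 (t+1)) := by
    funext g
    unfold fbar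
    rw [Nat.sub_zero, max_eq_left (Nat.zero_le _)]
  rw [e] at core
  simpa using core

lemma hasSum_mu_fiber (hβ0 : 0 < β) (hβ1 : β < 1) (hδ0 : 0 < δ) (hδ1 : δ < 1)
    (u0 : Fin n → Bool) :
    HasSum (fun g : {g : SamplePath n GC β δ // g.1 0 = u0} =>
        ∏ t ∈ Finset.range (absTime n GC β δ g.1),
          Kbench n GC β δ (g.1.1 t) (g.1.1 (t+1))) 1 := by
  have core := MLcore_hasSum (W := fun _ u v => Kbench n GC β δ u v)
    (d := fun _ => 1) (S := 0) (L := fun _ _ => True) (ε := (δ*(1-β)^n)^n)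
    hβ0 hβ1 hδ0 hδ1
    (fun t u v => Kbench_nonneg hβ0 hβ1 hδ0 hδ1 u v)
    (fun t u v h0 => h0)
    (fun t u _ => Kbench_sum u)
    (fun t u v _ _ => trivial)
    (fun t _ => rfl)
    (fun t u _ _ => Kbench_to_zero_ge hβ0 hβ1 hδ0 hδ1 u)
    (fun t => by norm_num)
    (eps_pos hβ0 hβ1 hδ0) (eps_le_one hβ0 hβ1 hδ0 hδ1) u0 trivial
  have e : (fun g : {g : SamplePath n GC β δ // g.1 0 = u0} =>
      fbar (fun _ u v => Kbench n GC β δ u v) 0 0 g.1)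
      = fun g => ∏ t ∈ Finset.range (absTime n GC β δ g.1),
          Kbench n GC β δ (g.1.1 t) (g.1.1 (t+1)) := by
    funext g
    unfold fbar
    rw [Nat.sub_zero, max_eq_left (Nat.zero_le _)]
  rw [e] at core
  simpa using core

lemma hasSum_nuPath (hn : 0 < n) (hGI : ∀ i, (GI.neighborFinset i).Nonempty)
    (hα0 : 0 ≤ α) (hα1 : α ≤ 1) (hβ0 : 0 < β) (hβ1 : β < 1) (hδ0 : 0 < δ) (hδ1 : δ < 1)
    (π : (Fin n → Bool) → ℝ) (hπ : IsPMF π) :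
    HasSum (nuPath n GC GI α β δ π) 1 := by
  have hsum1 : ∑ u, π u = 1 := (hasSum_fintype π).unique hπ.2
  have h := hasSum_of_fibers (n := n) (GC := GC) (β := β) (δ := δ) (F := nuPath n GC GI α β δ π) (c := fun u => π u)
    (fun u => by
      have base := (hasSum_nu_fiber (GC := GC) (GI := GI) hn hGI hα0 hα1 hβ0 hβ1 hδ0 hδ1 u).mul_left (π u)
      have e : (fun g : {g : SamplePath n GC β δ // g.1 0 = u} =>
          π u * ∏ t ∈ Finset.range (absTime n GC β δ g.1),
            Kdist n GC GI α β δ (g.1.1 t) (g.1.1 (t+1)))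
          = fun g => nuPath n GC GI α β δ π g.1 := by
        funext g
        unfold nuPath
        rw [g.2]
      rw [e] at base
      simpa using base)
  rw [hsum1] at h
  exact h

lemma hasSum_muPath (hβ0 : 0 < β) (hβ1 : β < 1) (hδ0 : 0 < δ) (hδ1 : δ < 1)
    (π : (Fin n → Bool) → ℝ) (hπ : IsPMF π) :
    HasSum (muPath n GC β δ π) 1 := by
  have hsum1 : ∑ u, π u = 1 := (hasSum_fintype π).unique hπ.2
  have h := hasSum_of_fibers (n := n) (GC := GC) (β := β) (δ := δ) (F := muPath n GC β δ π) (c := fun u => π u)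
    (fun u => by
      have base := (hasSum_mu_fiber (GC := GC) hβ0 hβ1 hδ0 hδ1 u).mul_left (π u)
      have e : (fun g : {g : SamplePath n GC β δ // g.1 0 = u} =>
          π u * ∏ t ∈ Finset.range (absTime n GC β δ g.1),
            Kbench n GC β δ (g.1.1 t) (g.1.1 (t+1)))
          = fun g => muPath n GC β δ π g.1 := by
        funext g
        unfold muPath
        rw [g.2]
      rw [e] at base
      simpa using base)
  rw [hsum1] at h
  exact h


lemma Phi_vanish (π : (Fin n → Bool) → ℝ) (h g : SamplePath n GC β δ) (hle : ¬ h ≤ g) :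
    PhiPath n GC GI α β δ π (h, g) = 0 := by
  by_contra hne
  apply hle
  unfold PhiPath at hne
  simp only at hne
  have hAB := mul_ne_zero_iff.1 hne
  have hA := (mul_ne_zero_iff.1 hAB.1).1
  have hC := hAB.2
  have h0 : h.1 0 = g.1 0 := by
    by_contra hc
    exact hA (if_neg hc)
  have hfac := Finset.prod_ne_zero_iff.1 hC
  have hstep : ∀ t, t < absTime n GC β δ g → h.1 (t+1) ≤ g.1 (t+1) := fun t ht =>
    stateCouple_ne_zero_le (hfac t (Finset.mem_range.2 ht))
  have hTle : absTime n GC β δ h ≤ absTime n GC β δ g := by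
    rcases Nat.eq_zero_or_pos (absTime n GC β δ g) with hz | hpos
    · have hg0 : g.1 0 = allSusc n := by have := absTime_mem g; rw [hz] at this; exact this
      have hh0 : h.1 0 = allSusc n := by rw [h0]; exact hg0
      rw [hz]
      exact (absTime_le_iff h 0).2 hh0
    · obtain ⟨j, hj⟩ : ∃ j, absTime n GC β δ g = j + 1 :=
        ⟨absTime n GC β δ g - 1, by omega⟩
      have h1 : g.1 (j+1) = allSusc n := by rw [← hj]; exact absTime_mem g
      have h2 : h.1 (j+1) = allSusc n := le_allSusc_eq (h1 ▸ hstep j (by omega))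
      rw [hj]
      exact (absTime_le_iff h _).2 h2
  have : h.1 ≤ g.1 := by
    intro t
    rcases le_or_gt t (absTime n GC β δ g) with ht | ht
    · cases t with
      | zero => rw [h0]
      | succ s => exact hstep s (by omega)
    · rw [absorbed h (by omega)]
      exact allSusc_le _
  exact Subtype.coe_le_coe.1 this

lemma hasSum_Phi_fst (hn : 0 < n) (hGI : ∀ i, (GI.neighborFinset i).Nonempty)
    (hα0 : 0 ≤ α) (hα1 : α ≤ 1) (hβ0 : 0 < β) (hβ1 : β < 1) (hδ0 : 0 < δ) (hδ1 : δ < 1)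
    (π : (Fin n → Bool) → ℝ) (h : SamplePath n GC β δ) :
    HasSum (fun g : SamplePath n GC β δ => PhiPath n GC GI α β δ π (h, g))
      (nuPath n GC GI α β δ π h) := by
  have core := MLcore_hasSum
    (W := fun t u v => stateCouple n GC GI α β δ (h.1 t) u (h.1 (t+1)) v)
    (d := fun t => Kdist n GC GI α β δ (h.1 t) (h.1 (t+1)))
    (S := absTime n GC β δ h) (L := fun t u => h.1 t ≤ u) (ε := (δ*(1-β)^n)^n)
    hβ0 hβ1 hδ0 hδ1
    (fun t u v => stateCouple_nonneg hn hGI hα0 hα1 hβ0 hβ1 hδ0 hδ1 _ _ _ _)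
    (fun t u v h0 => stateCouple_col_vanish hn hGI hα0 hα1 hβ0 hβ1 hδ0 hδ1 _ _ _ _ h0)
    (fun t u hL => stateCouple_sum_snd hL _)
    (fun t u v hL hw => stateCouple_ne_zero_le hw)
    (fun t hSt => by
      show Kdist n GC GI α β δ (h.1 t) (h.1 (t+1)) = 1
      rw [absorbed h hSt, absorbed h (by omega : absTime n GC β δ h ≤ t+1),
        Kdist_allSusc_allSusc])
    (fun t u hSt hL => by
      show (δ * (1-β)^n)^n ≤ stateCouple n GC GI α β δ (h.1 t) u (h.1 (t+1)) (allSusc n)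
      rw [absorbed h hSt, absorbed h (by omega : absTime n GC β δ h ≤ t+1)]
      exact stateCouple_to_zero_ge hβ0 hβ1 hδ0 hδ1 u)
    (fun t => Kdist_nonneg hn hGI hα0 hα1 hβ0 hβ1 hδ0 hδ1 _ _)
    (eps_pos hβ0 hβ1 hδ0) (eps_le_one hβ0 hβ1 hδ0 hδ1)
    (h.1 0) (le_refl _)
  have e : ∀ g : {g : SamplePath n GC β δ // g.1 0 = h.1 0},
      PhiPath n GC GI α β δ π (h, g.1)
        = π (h.1 0) * fbar (fun t u v => stateCouple n GC GI α β δ (h.1 t) u (h.1 (t+1)) v)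
            (absTime n GC β δ h) 0 g.1 := by
    intro g
    unfold PhiPath
    simp only
    rw [if_pos g.2.symm, one_mul]
    congr 1
    rw [fbar_zero]
    show _ = ∏ r ∈ Finset.range (max (absTime n GC β δ g.1) (absTime n GC β δ h)),
      stateCouple n GC GI α β δ (h.1 r) (g.1.1 r) (h.1 (r+1)) (g.1.1 (r+1))
    rcases le_or_gt (absTime n GC β δ h) (absTime n GC β δ g.1) with hTS | hTS
    · rw [max_eq_left hTS]
    · rw [max_eq_right hTS.le]
      have hright : ∏ r ∈ Finset.range (absTime n GC β δ h),
          stateCouple n GC GI α β δ (h.1 r) (g.1.1 r) (h.1 (r+1)) (g.1.1 (r+1)) = 0 := by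
        apply Finset.prod_eq_zero (Finset.mem_range.2 hTS)
        apply stateCouple_dead
        intro hle2
        have h1 : h.1 (absTime n GC β δ g.1) = allSusc n :=
          le_allSusc_eq (by rw [← absTime_mem g.1]; exact hle2)
        have h2 : absTime n GC β δ h ≤ absTime n GC β δ g.1 := (absTime_le_iff h _).2 h1
        omega
      have hleft : ∏ t ∈ Finset.range (absTime n GC β δ g.1),
          stateCouple n GC GI α β δ (h.1 t) (g.1.1 t) (h.1 (t+1)) (g.1.1 (t+1)) = 0 := by
        by_contra hc
        have hfac := Finset.prod_ne_zero_iff.1 hc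
        rcases Nat.eq_zero_or_pos (absTime n GC β δ g.1) with h0 | hpos
        · have hg0 : g.1.1 0 = allSusc n := by
            have := absTime_mem g.1; rw [h0] at this; exact this
          have hh0 : h.1 0 = allSusc n := by rw [← g.2]; exact hg0
          have : absTime n GC β δ h ≤ 0 := (absTime_le_iff h 0).2 hh0
          omega
        · obtain ⟨j, hj⟩ : ∃ j, absTime n GC β δ g.1 = j + 1 :=
            ⟨absTime n GC β δ g.1 - 1, by omega⟩
          have hf := hfac j (Finset.mem_range.2 (by omega))
          have hle2 := stateCouple_ne_zero_le hf
          have h1 : g.1.1 (j+1) = allSusc n := by rw [← hj]; exact absTime_mem g.1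
          have h2 : h.1 (j+1) = allSusc n := le_allSusc_eq (h1 ▸ hle2)
          have h3 : absTime n GC β δ h ≤ j+1 := (absTime_le_iff h _).2 h2
          omega
      rw [hleft, hright]
  have core2 := core.mul_left (π (h.1 0))
  rw [show (fun g : {g : SamplePath n GC β δ // g.1 0 = h.1 0} =>
      π (h.1 0) * fbar (fun t u v => stateCouple n GC GI α β δ (h.1 t) u (h.1 (t+1)) v)
        (absTime n GC β δ h) 0 g.1)
      = fun g : {g : SamplePath n GC β δ // g.1 0 = h.1 0} =>
          PhiPath n GC GI α β δ π (h, g.1) from funext fun g => (e g).symm] at core2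
  have hind := (hasSum_subtype_iff_indicator
    (s := {g : SamplePath n GC β δ | g.1 0 = h.1 0})
    (f := fun g => PhiPath n GC GI α β δ π (h, g))).1 core2
  rw [Set.indicator_eq_self.2 (by
    intro g hg
    by_contra hgs
    apply hg
    unfold PhiPath
    simp only
    rw [if_neg (fun hh => hgs hh.symm)]
    ring)] at hind
  unfold nuPath
  exact hind

lemma hasSum_Phi_snd (hn : 0 < n) (hGI : ∀ i, (GI.neighborFinset i).Nonempty)
    (hα0 : 0 ≤ α) (hα1 : α ≤ 1) (hβ0 : 0 < β) (hβ1 : β < 1) (hδ0 : 0 < δ) (hδ1 : δ < 1)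
    (π : (Fin n → Bool) → ℝ) (g : SamplePath n GC β δ) :
    HasSum (fun h : SamplePath n GC β δ => PhiPath n GC GI α β δ π (h, g))
      (muPath n GC β δ π g) := by
  have core := MLcore_hasSum
    (W := fun t x ω => stateCouple n GC GI α β δ x (g.1 t) ω (g.1 (t+1)))
    (d := fun t => Kbench n GC β δ (g.1 t) (g.1 (t+1)))
    (S := absTime n GC β δ g) (L := fun t x => x ≤ g.1 t) (ε := (δ*(1-β)^n)^n)
    hβ0 hβ1 hδ0 hδ1
    (fun t u v => stateCouple_nonneg hn hGI hα0 hα1 hβ0 hβ1 hδ0 hδ1 _ _ _ _)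
    (fun t u v h0 => stateCouple_row_vanish hn hGI hα0 hα1 hβ0 hβ1 hδ0 hδ1 _ _ _ _ h0)
    (fun t u hL => stateCouple_sum_fst hL _)
    (fun t u v hL hw => stateCouple_ne_zero_le hw)
    (fun t hSt => by
      show Kbench n GC β δ (g.1 t) (g.1 (t+1)) = 1
      rw [absorbed g hSt, absorbed g (by omega : absTime n GC β δ g ≤ t+1),
        Kbench_allSusc_allSusc])
    (fun t u hSt hL => by
      show (δ * (1-β)^n)^n ≤ stateCouple n GC GI α β δ u (g.1 t) (allSusc n) (g.1 (t+1))
      have h1 : g.1 t = allSusc n := absorbed g hSt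
      have h2 : g.1 (t+1) = allSusc n := absorbed g (by omega)
      have hL' : u ≤ allSusc n := h1 ▸ hL
      have hu := le_allSusc_eq hL'
      rw [h1, h2, hu, stateCouple_zeros]
      exact eps_le_one hβ0 hβ1 hδ0 hδ1)
    (fun t => Kbench_nonneg hβ0 hβ1 hδ0 hδ1 _ _)
    (eps_pos hβ0 hβ1 hδ0) (eps_le_one hβ0 hβ1 hδ0 hδ1)
    (g.1 0) (le_refl _)
  have e : ∀ hh : {hh : SamplePath n GC β δ // hh.1 0 = g.1 0},
      PhiPath n GC GI α β δ π (hh.1, g)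
        = π (g.1 0) * fbar (fun t x ω => stateCouple n GC GI α β δ x (g.1 t) ω (g.1 (t+1)))
            (absTime n GC β δ g) 0 hh.1 := by
    intro hh
    unfold PhiPath
    simp only
    rw [if_pos hh.2, hh.2, one_mul]
    congr 1
    rw [fbar_zero]
    show _ = ∏ r ∈ Finset.range (max (absTime n GC β δ hh.1) (absTime n GC β δ g)),
      stateCouple n GC GI α β δ (hh.1.1 r) (g.1 r) (hh.1.1 (r+1)) (g.1 (r+1))
    rcases le_or_gt (absTime n GC β δ hh.1) (absTime n GC β δ g) with hTS | hTS
    · rw [max_eq_right hTS]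
    · rw [max_eq_left hTS.le]
      have hright : ∏ r ∈ Finset.range (absTime n GC β δ hh.1),
          stateCouple n GC GI α β δ (hh.1.1 r) (g.1 r) (hh.1.1 (r+1)) (g.1 (r+1)) = 0 := by
        apply Finset.prod_eq_zero (Finset.mem_range.2 hTS)
        apply stateCouple_dead
        intro hle2
        have h1 : hh.1.1 (absTime n GC β δ g) = allSusc n :=
          le_allSusc_eq (by rw [← absorbed g le_rfl]; exact hle2)
        have h2 : absTime n GC β δ hh.1 ≤ absTime n GC β δ g := (absTime_le_iff hh.1 _).2 h1
        omega
      have hleft : ∏ t ∈ Finset.range (absTime n GC β δ g),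
          stateCouple n GC GI α β δ (hh.1.1 t) (g.1 t) (hh.1.1 (t+1)) (g.1 (t+1)) = 0 := by
        by_contra hc
        have hfac := Finset.prod_ne_zero_iff.1 hc
        rcases Nat.eq_zero_or_pos (absTime n GC β δ g) with h0 | hpos
        · have hg0 : g.1 0 = allSusc n := by
            have := absTime_mem g; rw [h0] at this; exact this
          have hh0 : hh.1.1 0 = allSusc n := by rw [hh.2]; exact hg0
          have : absTime n GC β δ hh.1 ≤ 0 := (absTime_le_iff hh.1 0).2 hh0
          omega
        · obtain ⟨j, hj⟩ : ∃ j, absTime n GC β δ g = j + 1 :=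
            ⟨absTime n GC β δ g - 1, by omega⟩
          have hf := hfac j (Finset.mem_range.2 (by omega))
          have hle2 := stateCouple_ne_zero_le hf
          have h1 : g.1 (j+1) = allSusc n := by rw [← hj]; exact absTime_mem g
          have h2 : hh.1.1 (j+1) = allSusc n := le_allSusc_eq (h1 ▸ hle2)
          have h3 : absTime n GC β δ hh.1 ≤ j+1 := (absTime_le_iff hh.1 _).2 h2
          omega
      rw [hleft, hright]
  have core2 := core.mul_left (π (g.1 0))
  rw [show (fun hh : {hh : SamplePath n GC β δ // hh.1 0 = g.1 0} =>
      π (g.1 0) * fbar (fun t x ω => stateCouple n GC GI α β δ x (g.1 t) ω (g.1 (t+1)))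
        (absTime n GC β δ g) 0 hh.1)
      = fun hh : {hh : SamplePath n GC β δ // hh.1 0 = g.1 0} =>
          PhiPath n GC GI α β δ π (hh.1, g) from funext fun hh => (e hh).symm] at core2
  have hind := (hasSum_subtype_iff_indicator
    (s := {hh : SamplePath n GC β δ | hh.1 0 = g.1 0})
    (f := fun hh => PhiPath n GC GI α β δ π (hh, g))).1 core2
  rw [Set.indicator_eq_self.2 (by
    intro hh hg2
    by_contra hgs
    apply hg2
    unfold PhiPath
    simp only
    rw [if_neg (show ¬ (hh.1 0 = g.1 0) from hgs)]
    ring)] at hind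
  unfold muPath
  exact hind

end Final

/-- for every pmf `π` on `Ω`, `Φ_π` is a monotone coupling of the
distancing sample-path law `ν_π` and the benchmark sample-path law `μ_π` with respect to
the partial order `⪯_Γ` on sample paths; in particular `Φ_π(h,g) = 0` unless `h ⪯_Γ g`,
`Σ_{g ⪰ h} Φ_π(h,g) = ν_π(h)`, and `Σ_{h ⪯ g} Φ_π(h,g) = μ_π(g)`. -/
theorem PhiPath_is_monotone_coupling
    (n : ℕ) (hn : 0 < n) (GC GI : SimpleGraph (Fin n)) [DecidableRel GC.Adj] [DecidableRel GI.Adj]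
    (hGI : ∀ i, (GI.neighborFinset i).Nonempty)
    (α β δ : ℝ) (hα : α ∈ Set.Icc (0:ℝ) 1) (hβ : β ∈ Set.Ioo (0:ℝ) 1)
    (hδ : δ ∈ Set.Ioo (0:ℝ) 1)
    (π : (Fin n → Bool) → ℝ) (hπ : IsPMF π) :
    IsMonotoneCoupling (PhiPath n GC GI α β δ π)
      (nuPath n GC GI α β δ π) (muPath n GC β δ π) ∧
    (∀ h g : SamplePath n GC β δ, ¬ h ≤ g → PhiPath n GC GI α β δ π (h, g) = 0) ∧
    (∀ h : SamplePath n GC β δ,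
      ∑' g : {g : SamplePath n GC β δ // h ≤ g}, PhiPath n GC GI α β δ π (h, g.1) =
        nuPath n GC GI α β δ π h) ∧
    (∀ g : SamplePath n GC β δ,
      ∑' h : {h : SamplePath n GC β δ // h ≤ g}, PhiPath n GC GI α β δ π (h.1, g) =
        muPath n GC β δ π g) := by
  obtain ⟨hα0, hα1⟩ := hα
  obtain ⟨hβ0, hβ1⟩ := hβ
  obtain ⟨hδ0, hδ1⟩ := hδ
  have hPhiFst : ∀ h : SamplePath n GC β δ,
      HasSum (fun g => PhiPath n GC GI α β δ π (h, g)) (nuPath n GC GI α β δ π h) :=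
    fun h => hasSum_Phi_fst hn hGI hα0 hα1 hβ0 hβ1 hδ0 hδ1 π h
  have hPhiSnd : ∀ g : SamplePath n GC β δ,
      HasSum (fun h => PhiPath n GC GI α β δ π (h, g)) (muPath n GC β δ π g) :=
    fun g => hasSum_Phi_snd hn hGI hα0 hα1 hβ0 hβ1 hδ0 hδ1 π g
  have hvan : ∀ h g : SamplePath n GC β δ, ¬ h ≤ g → PhiPath n GC GI α β δ π (h, g) = 0 :=
    fun h g => Phi_vanish π h g
  have hnn : ∀ p : SamplePath n GC β δ × SamplePath n GC β δ,
      0 ≤ PhiPath n GC GI α β δ π p := by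
    intro p
    unfold PhiPath
    refine mul_nonneg (mul_nonneg ?_ (hπ.1 _)) ?_
    · split <;> norm_num
    · exact Finset.prod_nonneg fun t _ =>
        stateCouple_nonneg hn hGI hα0 hα1 hβ0 hβ1 hδ0 hδ1 _ _ _ _
  have hnu : HasSum (nuPath n GC GI α β δ π) 1 :=
    hasSum_nuPath hn hGI hα0 hα1 hβ0 hβ1 hδ0 hδ1 π hπ
  have hmu : HasSum (muPath n GC β δ π) 1 :=
    hasSum_muPath hβ0 hβ1 hδ0 hδ1 π hπ
  have hnun : ∀ gp, 0 ≤ nuPath n GC GI α β δ π gp := fun gp =>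
    mul_nonneg (hπ.1 _) (Finset.prod_nonneg fun t _ =>
      Kdist_nonneg hn hGI hα0 hα1 hβ0 hβ1 hδ0 hδ1 _ _)
  have hmun : ∀ gp, 0 ≤ muPath n GC β δ π gp := fun gp =>
    mul_nonneg (hπ.1 _) (Finset.prod_nonneg fun t _ =>
      Kbench_nonneg hβ0 hβ1 hδ0 hδ1 _ _)
  have hnusum : (fun h => ∑' g, PhiPath n GC GI α β δ π (h, g)) = nuPath n GC GI α β δ π :=
    funext fun h => (hPhiFst h).tsum_eq
  have hsummable : Summable (PhiPath n GC GI α β δ π) := by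
    rw [summable_prod_of_nonneg (Pi.le_def.2 hnn)]
    exact ⟨fun h => (hPhiFst h).summable, by rw [hnusum]; exact hnu.summable⟩
  have htsum : ∑' p, PhiPath n GC GI α β δ π p = 1 := by
    rw [Summable.tsum_prod' hsummable (fun h => (hPhiFst h).summable)]
    calc ∑' h, ∑' g, PhiPath n GC GI α β δ π (h, g)
        = ∑' h, nuPath n GC GI α β δ π h := tsum_congr fun h => (hPhiFst h).tsum_eq
      _ = 1 := hnu.tsum_eq
  have hPhiHasSum : HasSum (PhiPath n GC GI α β δ π) 1 := htsum ▸ hsummable.hasSum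
  have bullet3 : ∀ h : SamplePath n GC β δ,
      ∑' g : {g : SamplePath n GC β δ // h ≤ g}, PhiPath n GC GI α β δ π (h, g.1)
        = nuPath n GC GI α β δ π h := by
    intro h
    have h1 : ∑' g : {g : SamplePath n GC β δ | h ≤ g},
        PhiPath n GC GI α β δ π (h, g.1) = ∑' g, PhiPath n GC GI α β δ π (h, g) :=
      tsum_subtype_eq_of_support (s := {g : SamplePath n GC β δ | h ≤ g})
        (fun g hg => hvan h g hg)
    exact h1.trans ((hPhiFst h).tsum_eq)
  have bullet4 : ∀ g : SamplePath n GC β δ,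
      ∑' h : {h : SamplePath n GC β δ // h ≤ g}, PhiPath n GC GI α β δ π (h.1, g)
        = muPath n GC β δ π g := by
    intro g
    have h1 : ∑' h : {h : SamplePath n GC β δ | h ≤ g},
        PhiPath n GC GI α β δ π (h.1, g) = ∑' h, PhiPath n GC GI α β δ π (h, g) :=
      tsum_subtype_eq_of_support (s := {h : SamplePath n GC β δ | h ≤ g})
        (fun h hg => hvan h g hg)
    exact h1.trans ((hPhiSnd g).tsum_eq)
  exact ⟨⟨⟨hnn, hPhiHasSum⟩, ⟨hnun, hnu⟩, ⟨hmun, hmu⟩, hvan,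
    fun x => (hPhiFst x).tsum_eq, fun y => (hPhiSnd y).tsum_eq⟩,
    hvan, bullet3, bullet4⟩
end

section
/- For every x ∈ [0,1]^n, the mean-field maps satisfy the componentwise bounds φ(x) ⪯ ψ(x) ⪯ (β·A_C + (1−δ)·I_n)·x; that is, for each i, φ_i(x) ≤ ψ_i(x) ≤ (1−δ)·x_i + β·Σ_{j∈N_i^C} x_j. -/
open Finset Filter Topology Matrix

/- Since `x ≥ 0` and `α ∈ [0,1]`, the awareness `μ_i(x)` is nonnegative, so the
distancing action `a_i(x) ≤ 1` and each factor `1 - β a_i(x) x_j` of the distancing product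
dominates the corresponding factor `1 - β x_j ≥ 0`; hence `p01d_i ≤ p01_i`. The Weierstrass
product inequality `1 - ∏ (1 - t_j) ≤ ∑ t_j` for `t_j ∈ [0,1]` gives `p01_i ≤ β ∑_{j ∈ N_i^C} x_j`.
Both maps are `(1-δ) x_i + (1 - (1-δ) x_i) p` with coefficient `1 - (1-δ) x_i ∈ [0,1]`, which is
monotone in `p` and bounded by `(1-δ) x_i + p`. -/

theorem Finset.one_sub_prod_one_sub_le_sum {ι : Type*} (s : Finset ι) (t : ι → ℝ)
    (h0 : ∀ j ∈ s, 0 ≤ t j) (h1 : ∀ j ∈ s, t j ≤ 1) :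
    1 - ∏ j ∈ s, (1 - t j) ≤ ∑ j ∈ s, t j := by
  induction s using Finset.cons_induction with
  | empty => simp
  | cons a s _ ih =>
    simp only [Finset.forall_mem_cons] at h0 h1
    rw [prod_cons, sum_cons]
    have hprod_le_one : ∏ j ∈ s, (1 - t j) ≤ 1 :=
      prod_le_one (fun j hj => sub_nonneg.2 (h1.2 j hj)) fun j hj => sub_le_self _ (h0.2 j hj)
    have := ih h0.2 h1.2
    have := mul_le_of_le_one_right h0.1 hprod_le_one
    linarith

section MeanField

variable {n : ℕ} {GC GI : SimpleGraph (Fin n)} [DecidableRel GC.Adj] [DecidableRel GI.Adj]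
  {α β : ℝ} {x : Fin n → ℝ}

theorem infoAwareness_nonneg (hα : α ∈ Set.Icc (0:ℝ) 1) (hx : ∀ j, 0 ≤ x j) (i : Fin n) :
    0 ≤ infoAwareness n GI α x i :=
  add_nonneg (mul_nonneg (div_nonneg hα.1 (Nat.cast_nonneg _))
      (sum_nonneg fun j _ => hx j))
    (mul_nonneg (div_nonneg (sub_nonneg.2 hα.2) n.cast_nonneg) (sum_nonneg fun j _ => hx j))

theorem distAction_le_one (hα : α ∈ Set.Icc (0:ℝ) 1) (hx : ∀ j, 0 ≤ x j) (i : Fin n) :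
    distAction n GI α x i ≤ 1 :=
  sub_le_self _ (infoAwareness_nonneg hα hx i)

theorem p01Dist_le_p01Bench (hα : α ∈ Set.Icc (0:ℝ) 1) (hβ : β ∈ Set.Icc (0:ℝ) 1)
    (hx : ∀ j, x j ∈ Set.Icc (0:ℝ) 1) (i : Fin n) :
    p01Dist n GC GI α β x i ≤ p01Bench n GC β x i := by
  have ha := distAction_le_one (GI := GI) hα (fun j => (hx j).1) i
  refine sub_le_sub_left (prod_le_prod (fun j _ => ?_) fun j _ => ?_) 1
  · exact sub_nonneg.2 (mul_le_one₀ hβ.2 (hx j).1 (hx j).2)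
  · have := mul_le_mul_of_nonneg_left ha (mul_nonneg hβ.1 (hx j).1)
    linarith

theorem p01Bench_nonneg (hβ : β ∈ Set.Icc (0:ℝ) 1) (hx : ∀ j, x j ∈ Set.Icc (0:ℝ) 1)
    (i : Fin n) : 0 ≤ p01Bench n GC β x i :=
  sub_nonneg.2 <| prod_le_one (fun j _ => sub_nonneg.2 (mul_le_one₀ hβ.2 (hx j).1 (hx j).2))
    fun j _ => sub_le_self _ (mul_nonneg hβ.1 (hx j).1)

theorem p01Bench_le_sum (hβ : β ∈ Set.Icc (0:ℝ) 1) (hx : ∀ j, x j ∈ Set.Icc (0:ℝ) 1)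
    (i : Fin n) : p01Bench n GC β x i ≤ β * ∑ j ∈ GC.neighborFinset i, x j := by
  rw [p01Bench, mul_sum]
  exact one_sub_prod_one_sub_le_sum _ _ (fun j _ => mul_nonneg hβ.1 (hx j).1)
    fun j _ => mul_le_one₀ hβ.2 (hx j).1 (hx j).2

end MeanField

theorem phi_le_psi_le_linear_general
    (n : ℕ) (GC GI : SimpleGraph (Fin n)) [DecidableRel GC.Adj] [DecidableRel GI.Adj]
    (α β δ : ℝ) (hα : α ∈ Set.Icc (0:ℝ) 1) (hβ : β ∈ Set.Ioo (0:ℝ) 1)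
    (hδ : δ ∈ Set.Ioo (0:ℝ) 1)
    (x : Fin n → ℝ) (hx : ∀ i, x i ∈ Set.Icc (0:ℝ) 1) (i : Fin n) :
    phiMap n GC GI α β δ x i ≤ psiMap n GC β δ x i ∧
    psiMap n GC β δ x i ≤ (1 - δ) * x i + β * ∑ j ∈ GC.neighborFinset i, x j := by
  have hβ' : β ∈ Set.Icc (0:ℝ) 1 := Set.Ioo_subset_Icc_self hβ
  have hdecay_nonneg : 0 ≤ (1 - δ) * x i := mul_nonneg (sub_nonneg.2 hδ.2.le) (hx i).1
  have hdecay_le_one : (1 - δ) * x i ≤ 1 :=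
    mul_le_one₀ (sub_le_self _ hδ.1.le) (hx i).1 (hx i).2
  constructor
  · unfold phiMap psiMap
    gcongr
    exact p01Dist_le_p01Bench hα hβ' hx i
  · have := mul_le_of_le_one_left (p01Bench_nonneg (GC := GC) hβ' hx i)
      (sub_le_self 1 hdecay_nonneg)
    unfold psiMap
    linarith [p01Bench_le_sum (GC := GC) hβ' hx i]

/-- for every `x ∈ [0,1]^n` the mean-field maps satisfy the componentwise
bounds `φ(x) ⪯ ψ(x) ⪯ (β·A_C + (1−δ)·I_n)·x`, i.e. for each `i`,
`φ_i(x) ≤ ψ_i(x) ≤ (1−δ)·x_i + β·Σ_{j ∈ N_i^C} x_j`. -/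
theorem phi_le_psi_le_linear
    (n : ℕ) (hn : 0 < n) (GC GI : SimpleGraph (Fin n)) [DecidableRel GC.Adj] [DecidableRel GI.Adj]
    (hGI : ∀ i, (GI.neighborFinset i).Nonempty)
    (α β δ : ℝ) (hα : α ∈ Set.Icc (0:ℝ) 1) (hβ : β ∈ Set.Ioo (0:ℝ) 1)
    (hδ : δ ∈ Set.Ioo (0:ℝ) 1)
    (x : Fin n → ℝ) (hx : ∀ i, x i ∈ Set.Icc (0:ℝ) 1) (i : Fin n) :
    phiMap n GC GI α β δ x i ≤ psiMap n GC β δ x i ∧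
    psiMap n GC β δ x i ≤ (1 - δ) * x i + β * ∑ j ∈ GC.neighborFinset i, x j :=
  phi_le_psi_le_linear_general n GC GI α β δ hα hβ hδ x hx i
end
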